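/- arXiv:2007.08798 — 5 statements merged into one kernel-verified Lean document; each statement's English description precedes it below -/
import Mathlib

section
/- Let q ≥ 5. The code 𝒞 with parity check matrix whose q+1 columns are the vectors (1,t,t²,t³) for t ∈ F_q together with (0,0,0,1) is a [q+1, q-3] linear code over F_q with minimum distance exactly 5 (i.e., it is MDS). -/
open Finset in
lemma aux_vand {F : Type*} [Field F] (S : Finset F) (f : F → F)
    (h : ∀ k : ℕ, k < S.card → ∑ a ∈ S, f a * a ^ k = 0) :
    ∀ a ∈ S, f a = 0 := by
  set n := S.card with hn
  set nodes : Fin n → F := fun i => (S.equivFin.symm i : F) with hnodes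
  have hinj : Function.Injective nodes := fun i j hij => by
    have := Subtype.coe_injective hij
    exact S.equivFin.symm.injective this
  have hsum : ∀ g : F → F, ∑ j : Fin n, g (nodes j) = ∑ a ∈ S, g a := by
    intro g
    rw [← Finset.sum_attach S g]
    exact Equiv.sum_comp S.equivFin.symm (fun x => g x)
  have hz : (fun j => f (nodes j)) = 0 := by
    apply Matrix.eq_zero_of_forall_pow_sum_mul_pow_eq_zero hinj
    intro i
    have := hsum (fun a => f a * a ^ (i : ℕ))
    simpa [this] using h i i.isLt
  intro a ha
  have : f (nodes (S.equivFin ⟨a, ha⟩)) = 0 := congrFun hz _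
  simpa [hnodes] using this

lemma sum_four {F : Type*} [Field F] [Fintype F] [DecidableEq F]
    (t : Fin 4 → F) (ht : Function.Injective t) (g : F → F) (c : Fin 4 → F) :
    ∑ a : F, g a * (if a = t 0 then c 0 else if a = t 1 then c 1
      else if a = t 2 then c 2 else if a = t 3 then c 3 else 0)
    = ∑ j : Fin 4, g (t j) * c j := by
  have h01 : t 1 ≠ t 0 := fun h => absurd (ht h) (by decide)
  have h02 : t 2 ≠ t 0 := fun h => absurd (ht h) (by decide)
  have h03 : t 3 ≠ t 0 := fun h => absurd (ht h) (by decide)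
  have h12 : t 2 ≠ t 1 := fun h => absurd (ht h) (by decide)
  have h13 : t 3 ≠ t 1 := fun h => absurd (ht h) (by decide)
  have h23 : t 3 ≠ t 2 := fun h => absurd (ht h) (by decide)
  rw [← Finset.sum_subset (Finset.subset_univ (Finset.univ.image t))]
  · rw [Finset.sum_image (fun a _ b _ h => ht h)]
    apply Finset.sum_congr rfl
    intro j _
    fin_cases j <;> simp [h01, h02, h03, h12, h13, h23]
  · intro a _ ha
    have : ∀ j : Fin 4, a ≠ t j := fun j h => ha (Finset.mem_image.mpr ⟨j, by simp, h.symm⟩)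
    simp [this 0, this 1, this 2, this 3]

def twistedCubic (F : Type*) [Field F] : Option F → Fin 4 → F
  | some t => ![1, t, t ^ 2, t ^ 3]
  | none => ![0, 0, 0, 1]

lemma tc_some {F : Type*} [Field F] (a : F) (i : Fin 4) :
    twistedCubic F (some a) i = a ^ (i : ℕ) := by
  fin_cases i <;> simp [twistedCubic]

lemma mem_ker_iff {F : Type*} [Field F] [Fintype F] (x : Option F → F) :
    x ∈ LinearMap.ker
        (Matrix.of (fun (i : Fin 4) (t : Option F) => twistedCubic F t i)).mulVecLin ↔
    ∀ i : Fin 4, twistedCubic F none i * x none + ∑ a : F, a ^ (i : ℕ) * x (some a) = 0 := by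
  rw [LinearMap.mem_ker]
  constructor
  · intro h i
    have := congrFun h i
    simpa [Matrix.mulVecLin_apply, Matrix.mulVec, dotProduct,
      Fintype.sum_option, tc_some] using this
  · intro h
    funext i
    simpa [Matrix.mulVecLin_apply, Matrix.mulVec, dotProduct,
      Fintype.sum_option, tc_some] using h i

lemma hn_split {F : Type*} [Field F] [Fintype F] [DecidableEq F] (x : Option F → F) :
    hammingNorm x = (if x none ≠ 0 then 1 else 0)
      + (Finset.univ.filter fun a : F => x (some a) ≠ 0).card := by
  simp only [hammingNorm, Finset.card_filter, Fintype.sum_option]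

/-- The `[q+1, q-3, 5]_q` code whose parity check matrix has as columns the
points of the twisted cubic: it has length `q+1`, dimension `q-3`, and
minimum distance exactly `5` (hence it is MDS). -/
theorem twistedCubic_code_is_MDS (F : Type*) [Field F] [Fintype F] [DecidableEq F]
    (hq : 5 ≤ Fintype.card F) :
    Fintype.card (Option F) = Fintype.card F + 1 ∧
    Module.finrank F
        (LinearMap.ker (Matrix.of (fun (i : Fin 4) (t : Option F) => twistedCubic F t i)).mulVecLin)
      = Fintype.card F - 3 ∧
    (∀ x ∈ LinearMap.ker
        (Matrix.of (fun (i : Fin 4) (t : Option F) => twistedCubic F t i)).mulVecLin,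
      x ≠ 0 → 5 ≤ hammingNorm x) ∧
    (∃ x ∈ LinearMap.ker
        (Matrix.of (fun (i : Fin 4) (t : Option F) => twistedCubic F t i)).mulVecLin,
      x ≠ 0 ∧ hammingNorm x = 5) := by
  classical
  -- four distinct elements of F
  set t : Fin 4 → F := fun j => (Fintype.equivFin F).symm (Fin.castLE (by omega) j) with htdef
  have ht : Function.Injective t := fun i j h => by
    have := (Fintype.equivFin F).symm.injective h
    exact Fin.castLE_injective _ this
  have hne : ∀ i j : Fin 4, i ≠ j → t i - t j ≠ 0 := fun i j hij =>
    sub_ne_zero.mpr (fun h => hij (ht h))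
  refine ⟨Fintype.card_option, ?_, ?_, ?_⟩
  · -- dimension
    have hsurj : Function.Surjective
        (Matrix.of (fun (i : Fin 4) (t : Option F) => twistedCubic F t i)).mulVecLin := by
      intro y
      set N : Matrix (Fin 4) (Fin 4) F := (Matrix.vandermonde t).transpose with hN
      have hdet : IsUnit N.det := by
        rw [hN, Matrix.det_transpose]
        exact isUnit_iff_ne_zero.mpr (Matrix.det_vandermonde_ne_zero_iff.mpr ht)
      set c : Fin 4 → F := N⁻¹.mulVec y with hc
      refine ⟨fun o => match o with
        | none => 0
        | some a => if a = t 0 then c 0 else if a = t 1 then c 1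
            else if a = t 2 then c 2 else if a = t 3 then c 3 else 0, ?_⟩
      funext i
      have hred := sum_four t ht (fun a => a ^ (i : ℕ)) c
      have : (N.mulVec c) i = y i := by
        rw [hc, Matrix.mulVec_mulVec, Matrix.mul_nonsing_inv _ hdet, Matrix.one_mulVec]
      rw [← this]
      simp only [Matrix.mulVecLin_apply, Matrix.mulVec, dotProduct, Matrix.of_apply,
        Fintype.sum_option, tc_some]
      rw [hred]
      have hz : twistedCubic F none i * 0 = 0 := mul_zero _
      simp only [mul_zero, zero_add]
      apply Finset.sum_congr rfl
      intro j _
      simp [hN, Matrix.transpose_apply, Matrix.vandermonde]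
    have hrn := LinearMap.finrank_range_add_finrank_ker
      (Matrix.of (fun (i : Fin 4) (t : Option F) => twistedCubic F t i)).mulVecLin
    rw [LinearMap.range_eq_top.mpr hsurj, finrank_top] at hrn
    simp only [Module.finrank_pi, Fintype.card_option, Fintype.card_fin] at hrn
    omega
  · -- minimum distance ≥ 5
    intro x hx hxne
    by_contra hcon
    push_neg at hcon
    have heq := (mem_ker_iff x).mp hx
    have hhn := hn_split x
    set S : Finset F := Finset.univ.filter fun a : F => x (some a) ≠ 0 with hS
    have hsum : ∀ k : ℕ, ∑ a ∈ S, x (some a) * a ^ k = ∑ a : F, a ^ k * x (some a) := by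
      intro k
      rw [Finset.sum_subset (Finset.filter_subset _ _)]
      · exact Finset.sum_congr rfl fun a _ => mul_comm _ _
      · intro a _ ha
        have : x (some a) = 0 := by
          by_contra h
          exact ha (Finset.mem_filter.mpr ⟨Finset.mem_univ a, h⟩)
        simp [this]
    by_cases hn0 : x none = 0
    · -- support within F-part, size ≤ 4
      have hcard : S.card ≤ 4 := by
        rw [hhn, if_neg (by simp [hn0])] at hcon
        omega
      have hzero : ∀ a ∈ S, x (some a) = 0 := by
        apply aux_vand
        intro k hk
        have hk4 : k < 4 := lt_of_lt_of_le hk hcard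
        have := heq ⟨k, hk4⟩
        rw [hn0, mul_zero, zero_add] at this
        rw [hsum k]
        exact this
      apply hxne
      funext o
      match o with
      | none => exact hn0
      | some a =>
        by_cases ha : a ∈ S
        · exact hzero a ha
        · by_contra h
          exact ha (Finset.mem_filter.mpr ⟨Finset.mem_univ a, h⟩)
    · -- none in support, F-part size ≤ 3
      have hcard : S.card ≤ 3 := by
        rw [hhn, if_pos hn0] at hcon
        omega
      have hzero : ∀ a ∈ S, x (some a) = 0 := by
        apply aux_vand
        intro k hk
        have hk3 : k < 3 := lt_of_lt_of_le hk hcard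
        have hk4 : k < 4 := by omega
        have := heq ⟨k, hk4⟩
        have h0 : twistedCubic F none ⟨k, hk4⟩ = 0 := by
          interval_cases k <;> simp [twistedCubic]
        rw [h0, zero_mul, zero_add] at this
        rw [hsum k]
        exact this
      have hall : ∀ a : F, x (some a) = 0 := by
        intro a
        by_cases ha : a ∈ S
        · exact hzero a ha
        · by_contra h
          exact ha (Finset.mem_filter.mpr ⟨Finset.mem_univ a, h⟩)
      have := heq 3
      simp only [twistedCubic] at this
      simp [hall] at this
      exact hn0 (by simpa using this)
  · -- a codeword of weight exactly 5
    set a := t 0; set b := t 1; set cc := t 2; set d := t 3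
    set cv : Fin 4 → F := ![(cc-b)*(d-b)*(d-cc), -(cc-a)*(d-a)*(d-cc),
      (b-a)*(d-a)*(d-b), -(b-a)*(cc-a)*(cc-b)] with hcv
    set V : F := (b-a)*(cc-a)*(d-a)*(cc-b)*(d-b)*(d-cc) with hV
    set w : Option F → F := fun o => match o with
      | none => V
      | some u => if u = t 0 then cv 0 else if u = t 1 then cv 1
          else if u = t 2 then cv 2 else if u = t 3 then cv 3 else 0
      with hw
    have hVne : V ≠ 0 := by
      apply mul_ne_zero; apply mul_ne_zero; apply mul_ne_zero; apply mul_ne_zero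
      apply mul_ne_zero
      · exact hne 1 0 (by decide)
      · exact hne 2 0 (by decide)
      · exact hne 3 0 (by decide)
      · exact hne 2 1 (by decide)
      · exact hne 3 1 (by decide)
      · exact hne 3 2 (by decide)
    have hcvne : ∀ j : Fin 4, cv j ≠ 0 := by
      intro j
      fin_cases j
      · show (cc-b)*(d-b)*(d-cc) ≠ 0
        exact mul_ne_zero (mul_ne_zero (hne 2 1 (by decide)) (hne 3 1 (by decide)))
          (hne 3 2 (by decide))
      · show -(cc-a)*(d-a)*(d-cc) ≠ 0
        exact mul_ne_zero (mul_ne_zero (neg_ne_zero.mpr (hne 2 0 (by decide)))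
          (hne 3 0 (by decide))) (hne 3 2 (by decide))
      · show (b-a)*(d-a)*(d-b) ≠ 0
        exact mul_ne_zero (mul_ne_zero (hne 1 0 (by decide)) (hne 3 0 (by decide)))
          (hne 3 1 (by decide))
      · show -(b-a)*(cc-a)*(cc-b) ≠ 0
        exact mul_ne_zero (mul_ne_zero (neg_ne_zero.mpr (hne 1 0 (by decide)))
          (hne 2 0 (by decide))) (hne 2 1 (by decide))
    refine ⟨w, ?_, ?_, ?_⟩
    · rw [mem_ker_iff]
      intro i
      have hred := sum_four t ht (fun u => u ^ (i : ℕ)) cv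
      have hws : ∀ u : F, w (some u) = (if u = t 0 then cv 0 else if u = t 1 then cv 1
          else if u = t 2 then cv 2 else if u = t 3 then cv 3 else 0) := fun u => rfl
      simp only [hws]
      rw [hred]
      fin_cases i <;>
        · simp [twistedCubic, Fin.sum_univ_four, hcv, hV]
          ring
    · intro h
      have : w none = 0 := congrFun h none
      exact hVne this
    · rw [hn_split]
      have hwn : w none = V := rfl
      rw [if_pos (by rw [hwn]; exact hVne)]
      have hfilt : (Finset.univ.filter fun u : F => w (some u) ≠ 0) = Finset.univ.image t := by
        ext u
        simp only [Finset.mem_filter, Finset.mem_univ, true_and, Finset.mem_image]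
        constructor
        · intro hu
          by_contra hcon
          push_neg at hcon
          have : ∀ j : Fin 4, u ≠ t j := fun j h => hcon j h.symm
          apply hu
          show (if u = t 0 then cv 0 else if u = t 1 then cv 1
            else if u = t 2 then cv 2 else if u = t 3 then cv 3 else 0) = 0
          simp [this 0, this 1, this 2, this 3]
        · rintro ⟨j, -, rfl⟩
          have h01 : t 1 ≠ t 0 := fun h => absurd (ht h) (by decide)
          have h02 : t 2 ≠ t 0 := fun h => absurd (ht h) (by decide)
          have h03 : t 3 ≠ t 0 := fun h => absurd (ht h) (by decide)
          have h12 : t 2 ≠ t 1 := fun h => absurd (ht h) (by decide)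
          have h13 : t 3 ≠ t 1 := fun h => absurd (ht h) (by decide)
          have h23 : t 3 ≠ t 2 := fun h => absurd (ht h) (by decide)
          show (if t j = t 0 then cv 0 else if t j = t 1 then cv 1
            else if t j = t 2 then cv 2 else if t j = t 3 then cv 3 else 0) ≠ 0
          fin_cases j <;> simp [h01, h02, h03, h12, h13, h23, hcvne 0, hcvne 1, hcvne 2, hcvne 3]
      rw [hfilt, Finset.card_image_of_injective _ ht]
      simp
end

section
/- Let q ≥ 5. The covering radius of the [q+1, q-3, 5]_q code associated with the twisted cubic is exactly 3; i.e., every vector of F_q⁴ is a linear combination of at most 3 columns of the parity check matrix H, and some vector requires 3 columns. -/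
section aux
variable {F : Type*} [Field F]

omit [Field F] in
lemma exists_ne4 [Fintype F] (hq : 5 ≤ Fintype.card F) (a b c d : F) :
    ∃ x : F, x ≠ a ∧ x ≠ b ∧ x ≠ c ∧ x ≠ d := by
  classical
  by_contra h
  push_neg at h
  have hsub : (Finset.univ : Finset F) ⊆ {a, b, c, d} := by
    intro x _
    simp only [Finset.mem_insert, Finset.mem_singleton]
    by_cases h1 : x = a; · exact Or.inl h1
    by_cases h2 : x = b; · exact Or.inr (Or.inl h2)
    by_cases h3 : x = c; · exact Or.inr (Or.inr (Or.inl h3))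
    exact Or.inr (Or.inr (Or.inr (h x h1 h2 h3)))
  have hle := Finset.card_le_card hsub
  have hc : ({a,b,c,d} : Finset F).card ≤ 4 := by
    apply le_trans (Finset.card_insert_le _ _)
    apply Nat.succ_le_succ
    apply le_trans (Finset.card_insert_le _ _)
    apply Nat.succ_le_succ
    apply le_trans (Finset.card_insert_le _ _)
    simp
  rw [Finset.card_univ] at hle
  omega

lemma quad_nonroot [Fintype F] (hq : 5 ≤ Fintype.card F) (p q r e : F) (hp : p ≠ 0) :
    ∃ x : F, x ≠ e ∧ p * x ^ 2 + q * x + r ≠ 0 := by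
  obtain ⟨x1, hx1e, -, -, -⟩ := exists_ne4 hq e e e e
  obtain ⟨x2, hx2e, hx21, -, -⟩ := exists_ne4 hq e x1 x1 x1
  obtain ⟨x3, hx3e, hx31, hx32, -⟩ := exists_ne4 hq e x1 x2 x2
  by_contra h
  push_neg at h
  have h1 := h x1 hx1e
  have h2 := h x2 hx2e
  have h3 := h x3 hx3e
  have e12 : (x1 - x2) * (p * (x1 + x2) + q) = 0 := by linear_combination h1 - h2
  have e13 : (x1 - x3) * (p * (x1 + x3) + q) = 0 := by linear_combination h1 - h3
  have f12 : p * (x1 + x2) + q = 0 :=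
    (mul_eq_zero.1 e12).resolve_left (sub_ne_zero.2 (Ne.symm hx21))
  have f13 : p * (x1 + x3) + q = 0 :=
    (mul_eq_zero.1 e13).resolve_left (sub_ne_zero.2 (Ne.symm hx31))
  have : p * (x2 - x3) = 0 := by linear_combination f12 - f13
  rcases mul_eq_zero.1 this with h' | h'
  · exact hp h'
  · exact hx32 (sub_eq_zero.1 h').symm

lemma rep3 (t u v a b c : F) (htu : t ≠ u) (huv : u ≠ v) (htv : t ≠ v) (s : Fin 4 → F)
    (h0 : a + b + c = s 0) (h1 : a * t + b * u + c * v = s 1)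
    (h2 : a * t ^ 2 + b * u ^ 2 + c * v ^ 2 = s 2)
    (h3 : a * t ^ 3 + b * u ^ 3 + c * v ^ 3 = s 3) :
    ∃ (T : Finset (Option F)) (cc : Option F → F),
      T.card ≤ 3 ∧ s = ∑ x ∈ T, cc x • twistedCubic F x := by
  classical
  refine ⟨{some t, some u, some v},
    fun x => if x = some t then a else if x = some u then b else c, ?_, ?_⟩
  · rw [Finset.card_insert_of_notMem (by simp [htu, htv]),
      Finset.card_insert_of_notMem (by simp [huv]), Finset.card_singleton]
  · rw [Finset.sum_insert (by simp [htu, htv]), Finset.sum_insert (by simp [huv]),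
      Finset.sum_singleton]
    simp only [if_pos rfl, if_neg (by simp [htu.symm] : ¬ (some u = some t)),
      if_neg (by simp [htv.symm] : ¬ (some v = some t)),
      if_neg (by simp [huv.symm] : ¬ (some v = some u)), if_pos rfl]
    funext i
    fin_cases i <;>
      simp [twistedCubic] <;>
      [linear_combination -h0; linear_combination -h1; linear_combination -h2;
        linear_combination -h3]

lemma rep2n (t u a b : F) (htu : t ≠ u) (s : Fin 4 → F)
    (h0 : a + b = s 0) (h1 : a * t + b * u = s 1)
    (h2 : a * t ^ 2 + b * u ^ 2 = s 2) :
    ∃ (T : Finset (Option F)) (cc : Option F → F),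
      T.card ≤ 3 ∧ s = ∑ x ∈ T, cc x • twistedCubic F x := by
  classical
  refine ⟨{some t, some u, none},
    fun x => if x = some t then a else if x = some u then b
      else s 3 - (a * t ^ 3 + b * u ^ 3), ?_, ?_⟩
  · rw [Finset.card_insert_of_notMem (by simp [htu]),
      Finset.card_insert_of_notMem (by simp), Finset.card_singleton]
  · rw [Finset.sum_insert (by simp [htu]), Finset.sum_insert (by simp),
      Finset.sum_singleton]
    simp only [if_pos rfl, if_neg (by simp [htu.symm] : ¬ (some u = some t)),
      if_neg (by simp : ¬ ((none : Option F) = some t)),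
      if_neg (by simp : ¬ ((none : Option F) = some u))]
    funext i
    fin_cases i <;>
      simp [twistedCubic] <;>
      [linear_combination -h0; linear_combination -h1; linear_combination -h2; ring]

lemma rep1n (s : Fin 4 → F) (h0 : s 0 = 0) (h1 : s 1 = 0) (h2 : s 2 = 0) :
    ∃ (T : Finset (Option F)) (cc : Option F → F),
      T.card ≤ 3 ∧ s = ∑ x ∈ T, cc x • twistedCubic F x := by
  classical
  refine ⟨{none}, fun _ => s 3, by simp, ?_⟩
  rw [Finset.sum_singleton]
  funext i
  fin_cases i <;> simp [twistedCubic, h0, h1, h2]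

lemma exists_three_sum [Fintype F] (hq : 5 ≤ Fintype.card F) (σ : F) :
    ∃ t u v : F, t ≠ u ∧ u ≠ v ∧ t ≠ v ∧ t + u + v = σ := by
  by_cases hchar : (2 : F) = 0
  · by_cases hσ : σ = 0
    · obtain ⟨x, hx0, hx1, -, -⟩ := exists_ne4 hq 0 1 1 1
      refine ⟨1, x, x + 1, fun h => hx1 h.symm, ?_, ?_, ?_⟩
      · intro h; exact one_ne_zero (α := F) (by linear_combination -h)
      · intro h; exact hx0 (by linear_combination -h)
      · rw [hσ]; linear_combination (x + 1) * hchar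
    · obtain ⟨d, hd0, hdσ, -, -⟩ := exists_ne4 hq 0 σ σ σ
      refine ⟨0, d, σ - d, fun h => hd0 h.symm, ?_, ?_, by ring⟩
      · intro h; exact hσ (by linear_combination -h + d * hchar)
      · intro h; exact hdσ (by linear_combination h)
  · obtain ⟨d, hd0, hdσ, hdσ2, -⟩ := exists_ne4 hq 0 σ (σ / 2) (σ / 2)
    refine ⟨0, d, σ - d, fun h => hd0 h.symm, ?_, ?_, by ring⟩
    · intro h
      apply hdσ2
      field_simp
      linear_combination h
    · intro h; exact hdσ (by linear_combination h)

end aux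

/-- The covering radius of the code associated with the twisted cubic is exactly 3:
every vector of `F⁴` is a linear combination of at most 3 columns of the parity check
matrix (whose columns are the points of the twisted cubic), and some vector is not a
linear combination of at most 2 columns. -/
theorem twistedCubic_code_covering_radius_three (F : Type*) [Field F] [Fintype F]
    (hq : 5 ≤ Fintype.card F) :
    (∀ s : Fin 4 → F, ∃ (T : Finset (Option F)) (c : Option F → F),
      T.card ≤ 3 ∧ s = ∑ t ∈ T, c t • twistedCubic F t) ∧
    (∃ s : Fin 4 → F, ∀ (T : Finset (Option F)) (c : Option F → F),
      T.card ≤ 2 → s ≠ ∑ t ∈ T, c t • twistedCubic F t) := by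
  constructor
  · intro s
    by_cases hs0 : s 0 = 0
    · by_cases hs1 : s 1 = 0
      · by_cases hs2 : s 2 = 0
        · exact rep1n s hs0 hs1 hs2
        · -- case 3 : s0 = s1 = 0, s2 ≠ 0 : three curve points with sum s3/s2
          obtain ⟨t, u, v, htu, huv, htv, hsum⟩ := exists_three_sum hq (s 3 / s 2)
          have hsum3 : s 2 * (t + u + v) = s 3 := by
            rw [hsum]; field_simp
          have hDut : u - t ≠ 0 := sub_ne_zero.2 htu.symm
          have hDvt : v - t ≠ 0 := sub_ne_zero.2 (Ne.symm htv)
          have hDvu : v - u ≠ 0 := sub_ne_zero.2 (Ne.symm huv)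
          set D := (u - t) * ((v - t) * (v - u)) with hD
          have hDne : D ≠ 0 := mul_ne_zero hDut (mul_ne_zero hDvt hDvu)
          apply rep3 t u v (s 2 * (v - u) / D) (s 2 * (t - v) / D) (s 2 * (u - t) / D)
            htu huv htv
          · rw [hs0]; field_simp [hD]; ring
          · rw [hs1]; field_simp [hD]; ring
          · field_simp [hD]; ring
          · field_simp [hD]
            linear_combination ((u - t) * ((v - t) * (v - u))) * hsum3
      · -- case 2 : s0 = 0, s1 ≠ 0
        by_cases hex : ∃ t : F, 2 * t * s 1 ≠ s 2
        · obtain ⟨t, ht⟩ := hex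
          set u := s 2 / s 1 - t with hu
          have hrel : s 1 * u = s 2 - s 1 * t := by rw [hu]; field_simp
          have htu : t ≠ u := by
            intro h; apply ht; rw [← h] at hrel; linear_combination hrel
          have htu' : t - u ≠ 0 := sub_ne_zero.2 htu
          apply rep2n t u (s 1 / (t - u)) (-(s 1 / (t - u))) htu
          · rw [hs0]; ring
          · field_simp; ring
          · field_simp
            linear_combination (t - u) * hrel
        · push_neg at hex
          have hs2 : s 2 = 0 := by linear_combination - hex 0
          have hchar : (2 : F) = 0 := by
            rcases mul_eq_zero.1 (show (2 : F) * s 1 = 0 by linear_combination hex 1 - hex 0) with h | h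
            · exact h
            · exact absurd h hs1
          set m := s 3 / s 1 with hmdef
          have hm : s 1 * m = s 3 := by rw [hmdef]; field_simp
          have key : ∀ x y : F, x ^ 2 = m → y ^ 2 = m → x = y := by
            intro x y hx hy
            have hsq : (x - y) ^ 2 = 0 := by
              linear_combination hx - hy + (m - x * y) * hchar + (y ^ 2 - m) * hchar
            have := pow_eq_zero_iff (n := 2) (by norm_num) |>.1 hsq
            exact sub_eq_zero.1 this
          obtain ⟨x2, hx21, -, -, -⟩ := exists_ne4 hq 0 0 0 0
          obtain ⟨x3, hx31, hx32, -, -⟩ := exists_ne4 hq 0 x2 x2 x2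
          obtain ⟨t, u, htu, htm, hum⟩ :
              ∃ t u : F, t ≠ u ∧ t ^ 2 ≠ m ∧ u ^ 2 ≠ m := by
            by_cases hq1 : (0 : F) ^ 2 = m
            · exact ⟨x2, x3, hx32.symm, fun h => hx21 (key _ _ h hq1),
                fun h => hx31 (key _ _ h hq1)⟩
            · by_cases hq2 : x2 ^ 2 = m
              · exact ⟨0, x3, hx31.symm, hq1, fun h => hx32 (key _ _ h hq2)⟩
              · exact ⟨0, x2, hx21.symm, hq1, hq2⟩
          have htu0 : t + u ≠ 0 := by
            intro h; exact htu (by linear_combination h - u * hchar)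
          set v := (m - t * u) / (t + u) with hvdef
          have hv : v * (t + u) = m - t * u := div_mul_cancel₀ _ htu0
          have hvt : v ≠ t := by
            intro h; apply htm; rw [h] at hv; linear_combination hv - t * u * hchar
          have hvu : v ≠ u := by
            intro h; apply hum; rw [h] at hv; linear_combination hv - t * u * hchar
          have hDut : u - t ≠ 0 := sub_ne_zero.2 htu.symm
          have hDvt : v - t ≠ 0 := sub_ne_zero.2 hvt
          have hDvu : v - u ≠ 0 := sub_ne_zero.2 hvu
          set D := (u - t) * ((v - t) * (v - u)) with hD
          have hDne : D ≠ 0 := mul_ne_zero hDut (mul_ne_zero hDvt hDvu)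
          apply rep3 t u v (s 1 * (u ^ 2 - v ^ 2) / D) (s 1 * (v ^ 2 - t ^ 2) / D)
            (s 1 * (t ^ 2 - u ^ 2) / D) htu (Ne.symm hvu) (Ne.symm hvt)
          · rw [hs0]; field_simp [hD]; ring
          · field_simp [hD]; ring
          · rw [hs2]; field_simp [hD]; ring
          · field_simp [hD]
            linear_combination (-((u - t) * ((v - t) * (v - u))) * s 1) * hv
              - ((u - t) * ((v - t) * (v - u))) * hm
              - (s 3 * ((u - t) * ((v - t) * (v - u)))) * hchar
    · -- case 1 : s0 ≠ 0
      obtain ⟨t, hte, htq⟩ := quad_nonroot hq (s 0) (-(2 * s 1)) (s 2) (s 1 / s 0) hs0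
      have hden : s 1 - s 0 * t ≠ 0 := by
        intro h; apply hte; field_simp; linear_combination -h
      set u := (s 2 - s 1 * t) / (s 1 - s 0 * t) with hu
      have hrel : u * (s 1 - s 0 * t) = s 2 - s 1 * t := div_mul_cancel₀ _ hden
      have hut : t ≠ u := by
        intro h; apply htq; rw [← h] at hrel; linear_combination -hrel
      have htu' : t - u ≠ 0 := sub_ne_zero.2 hut
      apply rep2n t u ((s 1 - s 0 * u) / (t - u)) ((s 0 * t - s 1) / (t - u)) hut
      · field_simp; ring
      · field_simp; ring
      · field_simp
        linear_combination (t - u) * hrel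
  · -- lower bound : (0,1,0,0) needs 3 columns
    refine ⟨![0, 1, 0, 0], ?_⟩
    intro T c hT h
    classical
    interval_cases hc : T.card
    · rw [Finset.card_eq_zero.1 hc] at h
      have h1 := congrFun h 1
      simp at h1
    · obtain ⟨x, hTx⟩ := Finset.card_eq_one.1 hc
      rw [hTx, Finset.sum_singleton] at h
      have h0 := congrFun h 0
      have h1 := congrFun h 1
      rcases x with _ | t
      · simp [twistedCubic] at h1
      · simp [twistedCubic] at h0 h1
        exact one_ne_zero (α := F) (by linear_combination h1 - t * h0)
    · obtain ⟨x, y, hxy, hTxy⟩ := Finset.card_eq_two.1 hc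
      rw [hTxy, Finset.sum_pair hxy] at h
      have h0 := congrFun h 0
      have h1 := congrFun h 1
      have h2 := congrFun h 2
      have h3 := congrFun h 3
      rcases x with _ | t <;> rcases y with _ | u
      · exact hxy rfl
      · simp [twistedCubic] at h0 h1
        exact one_ne_zero (α := F) (by linear_combination h1 - u * h0)
      · simp [twistedCubic] at h0 h1
        exact one_ne_zero (α := F) (by linear_combination h1 - t * h0)
      · have htu : t ≠ u := by simpa using hxy
        simp [twistedCubic] at h0 h1 h2 h3
        have hsum : t + u = 0 := by
          linear_combination (t + u) * h1 - t * u * h0 - h2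
        have hprod : t * u = 0 := by
          linear_combination t * u * h1 - (t + u) * h2 + h3
        have ht : t = 0 := by
          have ht2 : t ^ 2 = 0 := by linear_combination t * hsum - hprod
          exact pow_eq_zero_iff (n := 2) (by norm_num) |>.1 ht2
        have hu' : u = 0 := by linear_combination hsum - ht
        exact htu (by rw [ht, hu'])
end

section
/- In PG(3,q) with q ≥ 5, every point not on the twisted cubic 𝒞 lies on exactly one chord of 𝒞 (where chords are real chords, tangents, or imaginary chords), and no two chords of 𝒞 meet off 𝒞. -/
/-- The chords of the twisted cubic, parametrized as follows.
`Sum.inl (c, d)` is the chord through the two roots (over `F` or its quadratic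
extension, possibly coinciding) of `X² - cX - d`: it consists of the vectors
satisfying the linear recurrence `x_{k+2} = c·x_{k+1} + d·x_k`.  This family
comprises the real chords through two affine points, the tangents at affine
points (double root) and the imaginary chords (irreducible quadratic).
`Sum.inr (Sum.inl t)` is the real chord through `P(t)` and `P(∞)`, and
`Sum.inr (Sum.inr ())` is the tangent at `P(∞)`. -/
def chordSet (F : Type*) [Field F] : (F × F) ⊕ (F ⊕ Unit) → Set (Fin 4 → F)
  | Sum.inl (c, d) => {x | x 2 = c * x 1 + d * x 0 ∧ x 3 = c * x 2 + d * x 1}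
  | Sum.inr (Sum.inl t) => {x | x 1 = t * x 0 ∧ x 2 = t * x 1}
  | Sum.inr (Sum.inr _) => {x | x 0 = 0 ∧ x 1 = 0}

namespace TwistedCubic

variable {F : Type*} [Field F] {x : Fin 4 → F}

def hankelMinor (x : Fin 4 → F) : F := x 1 ^ 2 - x 0 * x 2

theorem exists_eq_smul_twistedCubic_of_minors_eq_zero (h₀₂ : x 1 ^ 2 = x 0 * x 2)
    (h₀₃ : x 0 * x 3 = x 1 * x 2) (h₁₃ : x 2 ^ 2 = x 1 * x 3) :
    ∃ t, ∃ l : F, x = l • twistedCubic F t := by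
  by_cases h₀ : x 0 = 0
  · have h₁ : x 1 = 0 := pow_eq_zero_iff two_ne_zero |>.mp (by rw [h₀₂, h₀, zero_mul])
    have h₂ : x 2 = 0 := pow_eq_zero_iff two_ne_zero |>.mp (by rw [h₁₃, h₁, zero_mul])
    refine ⟨none, x 3, funext fun i => ?_⟩
    fin_cases i <;> simp [twistedCubic, h₀, h₁, h₂]
  · refine ⟨some (x 1 / x 0), x 0, funext fun i => ?_⟩
    fin_cases i <;> simp [twistedCubic] <;> field_simp
    · linear_combination -h₀₂
    · linear_combination x 0 * h₀₃ - x 1 * h₀₂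

theorem hankelMinor_eq_zero_of_mem_chordSet_inr {p : F ⊕ Unit}
    (hx : x ∈ chordSet F (Sum.inr p)) : hankelMinor x = 0 := by
  rcases p with t | ⟨⟩
  · obtain ⟨h₁, h₂⟩ := hx
    simp only [hankelMinor]
    linear_combination x 1 * h₁ - x 0 * h₂
  · obtain ⟨h₀, h₁⟩ := hx
    simp [hankelMinor, h₀, h₁]

theorem mem_chordSet_inl_iff (hD : hankelMinor x ≠ 0) (c d : F) :
    x ∈ chordSet F (Sum.inl (c, d)) ↔
      c = (x 1 * x 2 - x 0 * x 3) / hankelMinor x ∧ d = (x 1 * x 3 - x 2 ^ 2) / hankelMinor x := by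
  unfold hankelMinor at hD ⊢
  rw [eq_div_iff hD, eq_div_iff hD]
  constructor
  · rintro ⟨h₂, h₃⟩
    exact ⟨by linear_combination x 0 * h₃ - x 1 * h₂, by linear_combination x 2 * h₂ - x 1 * h₃⟩
  · rintro ⟨hc, hd⟩
    constructor
    · apply mul_left_cancel₀ hD
      linear_combination -(x 1 * hc + x 0 * hd)
    · apply mul_left_cancel₀ hD
      linear_combination -(x 2 * hc + x 1 * hd)

/-- On a recurrence chord the other two Hankel minors are `-c` and `d` times `hankelMinor x`. -/
theorem exists_eq_smul_twistedCubic_of_mem_chordSet_inl {c d : F}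
    (hx : x ∈ chordSet F (Sum.inl (c, d))) (hD : hankelMinor x = 0) :
    ∃ t, ∃ l : F, x = l • twistedCubic F t := by
  obtain ⟨h₂, h₃⟩ := hx
  have h₀₂ : x 1 ^ 2 = x 0 * x 2 := sub_eq_zero.mp hD
  exact exists_eq_smul_twistedCubic_of_minors_eq_zero h₀₂
    (by linear_combination x 0 * h₃ - x 1 * h₂ - c * h₀₂)
    (by linear_combination x 2 * h₂ - x 1 * h₃ - d * h₀₂)

theorem existsUnique_mem_chordSet_of_hankelMinor_ne_zero (hD : hankelMinor x ≠ 0) :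
    ∃! p, x ∈ chordSet F p := by
  refine ⟨Sum.inl _, (mem_chordSet_inl_iff hD _ _).mpr ⟨rfl, rfl⟩, ?_⟩
  rintro (⟨c, d⟩ | p) hp
  · obtain ⟨rfl, rfl⟩ := (mem_chordSet_inl_iff hD c d).mp hp
    rfl
  · exact absurd (hankelMinor_eq_zero_of_mem_chordSet_inr hp) hD

theorem existsUnique_mem_chordSet_of_hankelMinor_eq_zero (hD : hankelMinor x = 0)
    (hxC : ∀ t (l : F), x ≠ l • twistedCubic F t) : ∃! p, x ∈ chordSet F p := by
  have not_inl (c d : F) : x ∉ chordSet F (Sum.inl (c, d)) := fun hp => by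
    obtain ⟨t, l, h⟩ := exists_eq_smul_twistedCubic_of_mem_chordSet_inl hp hD
    exact hxC t l h
  have h₀₂ : x 1 ^ 2 = x 0 * x 2 := sub_eq_zero.mp hD
  by_cases h₀ : x 0 = 0
  · have h₁ : x 1 = 0 := pow_eq_zero_iff two_ne_zero |>.mp (by rw [h₀₂, h₀, zero_mul])
    refine ⟨Sum.inr (Sum.inr ()), ⟨h₀, h₁⟩, ?_⟩
    rintro (⟨c, d⟩ | t | ⟨⟩) hp
    · exact absurd hp (not_inl c d)
    · have h₂ : x 2 = 0 := by rw [hp.2, h₁, mul_zero]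
      obtain ⟨t, l, h⟩ := exists_eq_smul_twistedCubic_of_minors_eq_zero h₀₂
        (by simp [h₀, h₁]) (by simp [h₁, h₂])
      exact absurd h (hxC t l)
    · rfl
  · refine ⟨Sum.inr (Sum.inl (x 1 / x 0)), ⟨by field_simp, by field_simp; linear_combination -h₀₂⟩, ?_⟩
    rintro (⟨c, d⟩ | t | ⟨⟩) hp
    · exact absurd hp (not_inl c d)
    · rw [eq_div_iff h₀ |>.mpr hp.1.symm]
    · exact absurd hp.1 h₀

end TwistedCubic

theorem point_off_cubic_unique_chord_general (F : Type*) [Field F] (x : Fin 4 → F)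
    (hxC : ∀ (t : Option F) (l : F), x ≠ l • twistedCubic F t) :
    ∃! p : (F × F) ⊕ (F ⊕ Unit), x ∈ chordSet F p := by
  by_cases hD : TwistedCubic.hankelMinor x = 0
  · exact TwistedCubic.existsUnique_mem_chordSet_of_hankelMinor_eq_zero hD hxC
  · exact TwistedCubic.existsUnique_mem_chordSet_of_hankelMinor_ne_zero hD

/-- Every point of `PG(3,q)` off the twisted cubic lies on exactly one chord of the
cubic (real chord, tangent or imaginary chord); equivalently, no two chords meet
off the cubic. -/
theorem point_off_cubic_unique_chord (F : Type*) [Field F] [Fintype F]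
    (hq : 5 ≤ Fintype.card F) (x : Fin 4 → F) (hx : x ≠ 0)
    (hxC : ∀ (t : Option F) (l : F), x ≠ l • twistedCubic F t) :
    ∃! p : (F × F) ⊕ (F ⊕ Unit), x ∈ chordSet F p :=
  point_off_cubic_unique_chord_general F x hxC
end

section
/- Let q ≥ 5 and let 𝒞 be the [q+1, q-3, 5]_q MDS code associated with the twisted cubic, with weight distribution A_w. Every weight-1 coset V of 𝒞 satisfies B_4(V) = C(q,4) and, for w ≥ 5, B_w(V) = A_w + (-1)^w * ( C(q+1, w)*C(w-1, 3) - C(q, w-1)*C(w-2, 2) ). -/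
/-!
Any four columns of the twisted cubic are linearly independent: pairing a kernel vector `u` with
the coefficients of a cubic `P` gives `∑ₜ u(t) P(t) + u(∞) · [X³]P = 0`, and cubics vanishing on
all but one point of a support of size `≤ 4` exist. So `𝒞` is MDS with redundancy `r = 4`.

For an MDS check map `H : F^n → F^r` and the coset `a e_c + 𝒞`, the number of coset vectors
supported inside `T` is `q^(|T|-r)` when `|T| ≥ r` (`H` restricted to `T` is onto) and `[c ∈ T]`
when `|T| < r` (it is injective, so only `a e_c` qualifies). Möbius inversion on subsets gives the
number with support exactly `S`, and summing over `|S| = w` yields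
`B_w = C(n,w) Δ^w p(0) + C(n-1,w-1) Δ^(w-1) e(0)` for two explicit sequences `p`, `e`; partial
alternating sums of binomial coefficients evaluate both.
-/

open Finset Module

lemma neg_one_pow_tsub {n k : ℕ} (h : k ≤ n) : (-1 : ℤ) ^ (n - k) = (-1) ^ (n + k) := by
  rw [show n + k = n - k + 2 * k by omega, pow_add, pow_mul]
  simp

section Moebius

variable {α κ : Type*} [DecidableEq κ]

lemma sum_Icc_neg_one_pow_card_sub (U S : Finset κ) :
    ∑ T ∈ Icc U S, (-1 : ℤ) ^ (#S - #T) = if U = S then 1 else 0 := by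
  by_cases hUS : U ⊆ S
  · have hsdiff : ∑ T ∈ Icc U S, (-1 : ℤ) ^ (#S - #T) = ∑ R ∈ (S \ U).powerset, (-1) ^ #R := by
      refine sum_nbij' (S \ ·) (S \ ·) ?_ ?_ ?_ ?_ ?_
      · intro T hT
        rw [mem_Icc] at hT
        exact mem_powerset.2 (sdiff_subset_sdiff subset_rfl hT.1)
      · intro R hR
        rw [mem_powerset] at hR
        exact mem_Icc.2 ⟨fun i hi => mem_sdiff.2 ⟨hUS hi, fun hiR => (mem_sdiff.1 (hR hiR)).2 hi⟩,
          sdiff_subset⟩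
      · intro T hT
        exact Finset.sdiff_sdiff_eq_self (mem_Icc.1 hT).2
      · intro R hR
        exact Finset.sdiff_sdiff_eq_self ((mem_powerset.1 hR).trans sdiff_subset)
      · intro T hT
        rw [card_sdiff_of_subset (mem_Icc.1 hT).2]
    rw [hsdiff, sum_powerset_neg_one_pow_card]
    exact if_congr (sdiff_eq_empty_iff_subset.trans ⟨subset_antisymm hUS, fun h => h ▸ subset_rfl⟩)
      rfl rfl
  · rw [Icc_eq_empty (by simpa using hUS), sum_empty, if_neg (by rintro rfl; exact hUS subset_rfl)]

lemma card_filter_eq_eq_sum_powerset (Y : Finset α) (g : α → Finset κ) (S : Finset κ) :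
    (#{a ∈ Y | g a = S} : ℤ) = ∑ T ∈ S.powerset, (-1 : ℤ) ^ (#S - #T) * #{a ∈ Y | g a ⊆ T} := by
  simp only [card_filter, Nat.cast_sum, Nat.cast_ite, Nat.cast_one, Nat.cast_zero, mul_sum]
  rw [sum_comm]
  refine sum_congr rfl fun a _ => ?_
  rw [← sum_Icc_neg_one_pow_card_sub, Icc_eq_filter_powerset, sum_filter]
  simp only [mul_ite, mul_one, mul_zero]

end Moebius

-- `signedBinomSum φ m` is the iterated forward difference `Δ^m φ 0` (`fwdDiff_iter_eq_sum_shift`).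
def signedBinomSum (φ : ℕ → ℤ) (m : ℕ) : ℤ :=
  ∑ j ∈ range (m + 1), (-1) ^ (m - j) * m.choose j * φ j

lemma sum_powerset_neg_one_pow_mul_card {α : Type*} (φ : ℕ → ℤ) (S : Finset α) :
    ∑ T ∈ S.powerset, (-1) ^ (#S - #T) * φ #T = signedBinomSum φ #S := by
  rw [sum_powerset_apply_card (fun j => (-1) ^ (#S - j) * φ j), signedBinomSum]
  exact sum_congr rfl fun j _ => by rw [nsmul_eq_mul]; ring

lemma sum_powerset_neg_one_pow_mul_ite_mem {α : Type*} [DecidableEq α] (φ : ℕ → ℤ) (c : α)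
    (S : Finset α) :
    ∑ T ∈ S.powerset, (-1) ^ (#S - #T) * (if c ∈ T then φ #T else 0)
      = if c ∈ S then signedBinomSum (fun j => φ (j + 1)) (#S - 1) else 0 := by
  by_cases hc : c ∈ S
  · have hcS' : c ∉ S.erase c := notMem_erase c S
    have hcard : #S = #(S.erase c) + 1 := (card_erase_add_one hc).symm
    rw [if_pos hc, ← insert_erase hc, sum_powerset_insert hcS', insert_erase hc, hcard,
      Nat.add_sub_cancel, ← sum_powerset_neg_one_pow_mul_card]
    have hout : ∀ T ∈ (S.erase c).powerset, c ∉ T := fun T hT hcT => hcS' (mem_powerset.1 hT hcT)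
    rw [sum_eq_zero fun T hT => by rw [if_neg (hout T hT), mul_zero], zero_add]
    refine sum_congr rfl fun T hT => ?_
    rw [if_pos (mem_insert_self c T), card_insert_of_notMem (hout T hT), Nat.add_sub_add_right]
  · rw [if_neg hc]
    exact sum_eq_zero fun T hT => by rw [if_neg fun hcT => hc (mem_powerset.1 hT hcT), mul_zero]

lemma signedBinomSum_ite_pow (q : ℤ) {r w : ℕ} (hr : 0 < r) (hrw : r ≤ w) :
    signedBinomSum (fun j => if r ≤ j then q ^ (j - r) else 0) w
      = ∑ i ∈ range (w - r), (-1) ^ i * w.choose i * (q ^ (w - r - i) - 1)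
        + (-1) ^ (w + r) * (w - 1).choose (r - 1) := by
  have hreflect : signedBinomSum (fun j => if r ≤ j then q ^ (j - r) else 0) w
      = ∑ i ∈ range (w - r + 1), (-1) ^ i * w.choose i * q ^ (w - r - i) := by
    rw [signedBinomSum, ← sum_range_reflect,
      ← sum_subset (range_subset_range.2 (by omega : w - r + 1 ≤ w + 1))]
    · refine sum_congr rfl fun i hi => ?_
      rw [mem_range] at hi
      rw [Nat.add_sub_cancel, if_pos (by omega), Nat.sub_sub_self (show i ≤ w by omega),
        Nat.choose_symm (show i ≤ w by omega), show w - i - r = w - r - i by omega]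
    · intro i hi hi'
      rw [mem_range] at hi hi'
      rw [if_neg (by omega), mul_zero]
  have halt : ∑ i ∈ range (w - r + 1), (-1) ^ i * (w.choose i : ℤ)
      = (-1) ^ (w + r) * (w - 1).choose (r - 1) := by
    obtain ⟨m, rfl⟩ : ∃ m, w = m + 1 := ⟨w - 1, by omega⟩
    rw [Int.alternating_sum_range_choose_eq_choose, neg_one_pow_tsub hrw,
      Nat.choose_symm_of_eq_add (show m = m + 1 - r + (r - 1) by omega), Nat.add_sub_cancel]
  have hlast : ∑ i ∈ range (w - r), (-1) ^ i * (w.choose i : ℤ) * (q ^ (w - r - i) - 1)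
      = ∑ i ∈ range (w - r + 1), (-1) ^ i * (w.choose i : ℤ) * (q ^ (w - r - i) - 1) := by
    rw [sum_range_succ, Nat.sub_self, pow_zero, sub_self, mul_zero, add_zero]
  rw [hreflect, ← halt, hlast, ← sum_add_distrib]
  exact sum_congr rfl fun i _ => by ring

lemma signedBinomSum_ite_lt {r m : ℕ} (hr : 2 ≤ r) (hrm : r ≤ m + 1) :
    signedBinomSum (fun j => if j + 1 < r then 1 else 0) m
      = (-1) ^ (m + r) * (m - 1).choose (r - 2) := by
  obtain ⟨s, rfl⟩ : ∃ s, r = s + 2 := ⟨r - 2, by omega⟩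
  rw [signedBinomSum, ← sum_subset (range_subset_range.2 (by omega : s + 1 ≤ m + 1))]
  · obtain ⟨k, rfl⟩ : ∃ k, m = k + 1 := ⟨m - 1, by omega⟩
    have hsum : ∑ j ∈ range (s + 1), (-1) ^ (k + 1 - j) * ((k + 1).choose j : ℤ)
          * (if j + 1 < s + 2 then 1 else 0)
        = (-1) ^ (k + 1) * ∑ j ∈ range (s + 1), (-1) ^ j * ((k + 1).choose j : ℤ) := by
      rw [mul_sum]
      refine sum_congr rfl fun j hj => ?_
      rw [mem_range] at hj
      rw [if_pos (by omega), neg_one_pow_tsub (by omega), pow_add]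
      ring
    rw [hsum, Int.alternating_sum_range_choose_eq_choose, Nat.add_sub_cancel, Nat.add_sub_cancel]
    ring
  · intro j _ hj
    rw [mem_range] at hj
    rw [if_neg (by omega), mul_zero]

lemma natCard_preimage_of_surjective {F V W : Type*} [Field F] [Finite F] [AddCommGroup V]
    [Module F V] [FiniteDimensional F V] [AddCommGroup W] [Module F W] [FiniteDimensional F W]
    {L : V →ₗ[F] W} (hL : Function.Surjective L) (y : W) :
    Nat.card (L ⁻¹' {y}) = Nat.card F ^ (finrank F V - finrank F W) := by
  have hrank := L.finrank_range_add_finrank_ker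
  rw [LinearMap.range_eq_top.2 hL, finrank_top] at hrank
  rw [show finrank F V - finrank F W = finrank F (LinearMap.ker L) by omega,
    ← Module.natCard_eq_pow_finrank (K := F)]
  exact Nat.card_congr (L.toAddMonoidHom.fiberEquivKerOfSurjective hL y)

section Supported

variable {ι F : Type*} [Field F]

variable (F) in
def supportedIn (T : Finset ι) : Submodule F (ι → F) :=
  ⨅ i ∈ (↑T : Set ι)ᶜ, LinearMap.ker (LinearMap.proj i)

lemma finrank_supportedIn [DecidableEq ι] (T : Finset ι) : finrank F (supportedIn F T) = #T :=
  (LinearMap.iInfKerProjEquiv F (fun _ => F) disjoint_compl_right (by simp)).finrank_eq.trans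
    (by simp)

variable [Fintype ι] [DecidableEq F]

def hammingSupport (u : ι → F) : Finset ι := {i | u i ≠ 0}

lemma hammingSupport_single [DecidableEq ι] {c : ι} {a : F} (ha : a ≠ 0) :
    hammingSupport (Pi.single c a) = {c} := by
  ext i
  by_cases hi : i = c
  · subst hi; simp [hammingSupport, ha]
  · simp [hammingSupport, hi]

lemma exists_eq_single_of_hammingNorm_eq_one [DecidableEq ι] {u : ι → F} (hu : hammingNorm u = 1) :
    ∃ c a, a ≠ 0 ∧ u = Pi.single c a := by
  obtain ⟨c, hc⟩ := card_eq_one.1 hu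
  have hmem : ∀ i, u i ≠ 0 ↔ i = c := fun i => by
    simpa using congrArg (i ∈ ·) hc
  refine ⟨c, u c, (hmem c).2 rfl, funext fun i => ?_⟩
  by_cases hi : i = c
  · subst hi; simp
  · rw [Pi.single_eq_of_ne hi]; exact not_not.1 (mt (hmem i).1 hi)

lemma mem_supportedIn {T : Finset ι} {u : ι → F} : u ∈ supportedIn F T ↔ hammingSupport u ⊆ T := by
  simp [supportedIn, Submodule.mem_iInf, hammingSupport, subset_iff, not_imp_comm]

lemma supportedIn_mono {T T' : Finset ι} (h : T' ⊆ T) : supportedIn F T' ≤ supportedIn F T :=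
  fun _ hu => mem_supportedIn.2 ((mem_supportedIn.1 hu).trans h)

end Supported

section MDS

variable {ι F : Type*} [Fintype ι] [Field F] [DecidableEq F] {r : ℕ} {H : (ι → F) →ₗ[F] (Fin r → F)}

variable (H) in
def IsMDSParityCheck : Prop := ∀ u ∈ LinearMap.ker H, hammingNorm u ≤ r → u = 0

lemma injective_domRestrict_supportedIn (hH : IsMDSParityCheck H)
    {T : Finset ι} (hT : #T ≤ r) : Function.Injective (H.domRestrict (supportedIn F T)) := by
  rw [← LinearMap.ker_eq_bot, LinearMap.ker_eq_bot']
  intro w hw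
  exact Subtype.ext (hH w hw ((card_le_card (mem_supportedIn.1 w.2)).trans hT))

lemma surjective_domRestrict_supportedIn [DecidableEq ι]
    (hH : IsMDSParityCheck H)
    {T : Finset ι} (hT : r ≤ #T) : Function.Surjective (H.domRestrict (supportedIn F T)) := by
  obtain ⟨T', hT'T, hT'⟩ := exists_subset_card_eq hT
  rw [← LinearMap.range_eq_top, LinearMap.range_domRestrict]
  refine Submodule.eq_top_of_finrank_eq (le_antisymm (Submodule.finrank_le _) ?_)
  calc finrank F (Fin r → F) = finrank F (supportedIn F T') := by
        rw [finrank_supportedIn, hT', finrank_fin_fun]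
    _ = finrank F ((supportedIn F T').map H) := by
        rw [← LinearMap.range_domRestrict,
          LinearMap.finrank_range_of_inj (injective_domRestrict_supportedIn hH hT'.le)]
    _ ≤ finrank F ((supportedIn F T).map H) :=
        Submodule.finrank_mono (Submodule.map_mono (supportedIn_mono hT'T))

lemma card_fiber_hammingSupport_subset_of_le [DecidableEq ι] [Fintype F]
    (hH : IsMDSParityCheck H)
    {T : Finset ι} (hT : r ≤ #T) (y : Fin r → F) :
    #{u | H u = y ∧ hammingSupport u ⊆ T} = Fintype.card F ^ (#T - r) := by
  calc #{u | H u = y ∧ hammingSupport u ⊆ T}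
      = Nat.card {u // H u = y ∧ hammingSupport u ⊆ T} := by
        rw [Nat.card_eq_fintype_card, Fintype.card_subtype]
    _ = Nat.card (H.domRestrict (supportedIn F T) ⁻¹' {y}) :=
        Nat.card_congr ((Equiv.subtypeSubtypeEquivSubtypeInter _ (fun u => H u = y)).trans
          (Equiv.subtypeEquivRight fun u => by rw [mem_supportedIn, and_comm])).symm
    _ = Fintype.card F ^ (#T - r) := by
        rw [natCard_preimage_of_surjective (surjective_domRestrict_supportedIn hH hT),
          finrank_supportedIn, finrank_fin_fun, Nat.card_eq_fintype_card]

lemma eq_single_of_hammingSupport_subset [DecidableEq ι]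
    (hH : IsMDSParityCheck H)
    {T : Finset ι} (hT : #T < r) {c : ι} {a : F} {u : ι → F} (hu : H u = H (Pi.single c a))
    (hsupp : hammingSupport u ⊆ T) : u = Pi.single c a := by
  have hsub : hammingSupport (u - Pi.single c a) ⊆ insert c T := by
    intro i hi
    by_cases hic : i = c
    · exact hic ▸ mem_insert_self c T
    · refine mem_insert_of_mem (hsupp ?_)
      simpa [hammingSupport, Pi.single_eq_of_ne hic] using hi
  refine sub_eq_zero.1 (hH _ (by simp [hu]) ?_)
  exact (card_le_card hsub).trans ((card_insert_le c T).trans hT)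

lemma card_fiber_single_hammingSupport_subset [DecidableEq ι] [Fintype F]
    (hH : IsMDSParityCheck H)
    {c : ι} {a : F} (ha : a ≠ 0) (T : Finset ι) :
    #{u | H u = H (Pi.single c a) ∧ hammingSupport u ⊆ T}
      = if r ≤ #T then Fintype.card F ^ (#T - r) else if c ∈ T then 1 else 0 := by
  split_ifs with hT hc
  · exact card_fiber_hammingSupport_subset_of_le hH hT _
  · rw [card_eq_one]
    refine ⟨Pi.single c a, eq_singleton_iff_unique_mem.2 ⟨?_, fun u hu => ?_⟩⟩
    · simpa [hammingSupport_single ha] using hc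
    · rw [mem_filter] at hu
      exact eq_single_of_hammingSupport_subset hH (not_le.1 hT) hu.2.1 hu.2.2
  · refine card_eq_zero.2 (filter_eq_empty_iff.2 fun u _ hu => hc ?_)
    rw [eq_single_of_hammingSupport_subset hH (not_le.1 hT) hu.1 hu.2,
      hammingSupport_single ha] at hu
    exact singleton_subset_iff.1 hu.2

end MDS

section WeightOneCoset

variable {ι F : Type*} [Fintype ι] [DecidableEq ι] [Field F] [Fintype F] [DecidableEq F]
  {r : ℕ} {H : (ι → F) →ₗ[F] (Fin r → F)}

lemma card_fiber_single_hammingSupport_eq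
    (hH : IsMDSParityCheck H) {c : ι} {a : F} (ha : a ≠ 0)
    (S : Finset ι) :
    (#{u | H u = H (Pi.single c a) ∧ hammingSupport u = S} : ℤ)
      = signedBinomSum (fun j => if r ≤ j then (Fintype.card F : ℤ) ^ (j - r) else 0) #S
        + if c ∈ S then signedBinomSum (fun j => if j + 1 < r then 1 else 0) (#S - 1) else 0 := by
  rw [← filter_filter, card_filter_eq_eq_sum_powerset, ← sum_powerset_neg_one_pow_mul_card,
    ← sum_powerset_neg_one_pow_mul_ite_mem (fun j => if j < r then 1 else 0), ← sum_add_distrib]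
  refine sum_congr rfl fun T _ => ?_
  rw [filter_filter, card_fiber_single_hammingSupport_subset hH ha, ← mul_add]
  congr 1
  split_ifs <;> first | omega | simp

theorem card_fiber_single_hammingNorm_eq
    (hH : IsMDSParityCheck H) {c : ι} {a : F} (ha : a ≠ 0)
    (hr : 2 ≤ r) {w : ℕ} (hrw : r ≤ w) :
    (#{u | H u = H (Pi.single c a) ∧ hammingNorm u = w} : ℤ)
      = (Fintype.card ι).choose w * ∑ i ∈ range (w - r),
          (-1) ^ i * w.choose i * ((Fintype.card F : ℤ) ^ (w - r - i) - 1)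
        + (-1) ^ (w + r) * ((Fintype.card ι).choose w * (w - 1).choose (r - 1)
          - (Fintype.card ι - 1).choose (w - 1) * (w - 2).choose (r - 2)) := by
  have hfiber : #{u | H u = H (Pi.single c a) ∧ hammingNorm u = w}
      = ∑ S ∈ powersetCard w univ, #{u | H u = H (Pi.single c a) ∧ hammingSupport u = S} := by
    rw [card_eq_sum_card_fiberwise (f := hammingSupport) fun u hu => ?_]
    · refine sum_congr rfl fun S hS => ?_
      rw [filter_filter]
      refine congrArg card (filter_congr fun u _ => ?_)
      constructor
      · rintro ⟨⟨hu, -⟩, hS'⟩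
        exact ⟨hu, hS'⟩
      · rintro ⟨hu, rfl⟩
        exact ⟨⟨hu, (mem_powersetCard.1 hS).2⟩, rfl⟩
    · exact mem_powersetCard.2 ⟨subset_univ _, (mem_filter.1 hu).2.2⟩
  have hcontain : #{S ∈ powersetCard w univ | c ∈ S} = (Fintype.card ι - 1).choose (w - 1) := by
    simpa using card_filter_powersetCard_subset {c} univ w (by simp) (by simpa using by omega)
  rw [hfiber, Nat.cast_sum, sum_congr rfl fun S hS => by
    rw [card_fiber_single_hammingSupport_eq hH ha, (mem_powersetCard.1 hS).2]]
  rw [sum_add_distrib, sum_const, card_powersetCard, card_univ, sum_ite, sum_const_zero,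
    add_zero, sum_const, hcontain, signedBinomSum_ite_pow _ (by omega) hrw,
    signedBinomSum_ite_lt hr (by omega)]
  obtain ⟨m, rfl⟩ : ∃ m, w = m + 1 := ⟨w - 1, by omega⟩
  simp only [nsmul_eq_mul, Nat.add_sub_cancel, show m + 1 - 2 = m - 1 by omega]
  ring

end WeightOneCoset

section TwistedCubic

open Polynomial Matrix

variable {F : Type*} [Field F]

lemma sum_coeff_mul_twistedCubic_some {P : F[X]} (hP : P.natDegree < 4) (t : F) :
    ∑ i : Fin 4, P.coeff i * twistedCubic F (some t) i = P.eval t := by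
  rw [eval_eq_sum_range' hP, Fin.sum_univ_four]
  simp [sum_range_succ, twistedCubic]

lemma sum_coeff_mul_twistedCubic_none (P : F[X]) :
    ∑ i : Fin 4, P.coeff i * twistedCubic F none i = P.coeff 3 := by
  simp [Fin.sum_univ_four, twistedCubic]

lemma twistedCubic_pairing [Fintype F] {u : Option F → F}
    (hu : Matrix.of (fun i t => twistedCubic F t i) *ᵥ u = 0) {P : F[X]} (hP : P.natDegree < 4) :
    P.coeff 3 * u none + ∑ t, P.eval t * u (some t) = 0 := by
  have h := congrArg (fun x => (fun i : Fin 4 => P.coeff i) ⬝ᵥ x) hu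
  simp only [Matrix.dotProduct_mulVec, dotProduct_zero] at h
  rw [← h, dotProduct, Fintype.sum_option]
  simp only [Matrix.vecMul, dotProduct, Matrix.of_apply, sum_coeff_mul_twistedCubic_none,
    sum_coeff_mul_twistedCubic_some hP]

variable [Fintype F] [DecidableEq F]

lemma hammingNorm_option (u : Option F → F) :
    hammingNorm u = (if u none = 0 then 0 else 1) + #{t | u (some t) ≠ 0} := by
  simp [hammingNorm, card_filter, Fintype.sum_option]

lemma isMDSParityCheck_twistedCubic :
    IsMDSParityCheck (Matrix.of fun (i : Fin 4) (t : Option F) => twistedCubic F t i).mulVecLin := by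
  intro u hu hw
  rw [LinearMap.mem_ker, mulVecLin_apply] at hu
  rw [hammingNorm_option] at hw
  set T : Finset F := {t | u (some t) ≠ 0} with hT
  have hvanish : ∀ P : F[X], (∀ t ∈ T, P.eval t = 0) → ∑ t, P.eval t * u (some t) = 0 :=
    fun P hP => sum_eq_zero fun t _ => by
      by_cases ht : t ∈ T
      · rw [hP t ht, zero_mul]
      · rw [show u (some t) = 0 by simpa [hT] using ht, mul_zero]
  have hnone : u none = 0 := by
    by_contra h0
    rw [if_neg h0] at hw
    -- the factor `X ^ (3 - #T)` makes the degree exactly 3, so `∞` sees the leading coefficient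
    have hmonic : (X ^ (3 - #T) * ∏ t ∈ T, (X - C t)).Monic :=
      (monic_X_pow _).mul (monic_prod_X_sub_C _ _)
    have hdeg : (X ^ (3 - #T) * ∏ t ∈ T, (X - C t)).natDegree = 3 := by
      rw [(monic_X_pow _).natDegree_mul (monic_prod_X_sub_C _ _), natDegree_X_pow,
        natDegree_finsetProd_X_sub_C_eq_card]
      omega
    have hc3 : (X ^ (3 - #T) * ∏ t ∈ T, (X - C t)).coeff 3 = 1 := by
      simpa only [hdeg] using hmonic.coeff_natDegree
    have hP := twistedCubic_pairing hu (P := X ^ (3 - #T) * ∏ t ∈ T, (X - C t)) (by omega)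
    rw [hvanish _ fun t ht => by simp [eval_prod, prod_eq_zero ht], add_zero, hc3,
      one_mul] at hP
    exact h0 hP
  have hsome : ∀ t₀, u (some t₀) = 0 := by
    intro t₀
    by_contra h
    have ht₀ : t₀ ∈ T := by simpa [hT] using h
    have hP := twistedCubic_pairing hu (P := ∏ t ∈ T.erase t₀, (X - C t)) (by
      rw [natDegree_finsetProd_X_sub_C_eq_card, card_erase_of_mem ht₀]
      omega)
    rw [hnone, mul_zero, zero_add, sum_eq_single t₀ (fun t _ ht => ?_) (by simp)] at hP
    · refine h ((mul_eq_zero.1 hP).resolve_left ?_)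
      simp [eval_prod, prod_eq_zero_iff, sub_eq_zero]
    · by_cases htT : t ∈ T
      · simp [eval_prod, prod_eq_zero (mem_erase.2 ⟨ht, htT⟩)]
      · rw [show u (some t) = 0 by simpa [hT] using htT, mul_zero]
  funext s
  cases s with
  | none => exact hnone
  | some t => exact hsome t

end TwistedCubic

theorem weight_one_coset_distribution_general (F : Type*) [Field F] [Fintype F] [DecidableEq F]
    (A : ℕ → ℤ)
    (hA : ∀ w, 5 ≤ w → A w = ((Fintype.card F + 1).choose w : ℤ) *
      ∑ j ∈ Finset.range (w - 4),
        (-1 : ℤ) ^ j * (w.choose j : ℤ) * ((Fintype.card F : ℤ) ^ (w - 4 - j) - 1))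
    (v : Option F → F) (V : Set (Option F → F))
    (hV : V = {u | u - v ∈ LinearMap.ker
      (Matrix.of (fun (i : Fin 4) (t : Option F) => twistedCubic F t i)).mulVecLin})
    (hwt1 : ∃ u ∈ V, hammingNorm u = 1)
    (B : ℕ → ℕ)
    (hB : ∀ w, B w = Nat.card {u : Option F → F // u ∈ V ∧ hammingNorm u = w}) :
    B 4 = (Fintype.card F).choose 4 ∧
    ∀ w, 5 ≤ w → (B w : ℤ) = A w + (-1 : ℤ) ^ w *
      (((Fintype.card F + 1).choose w : ℤ) * (((w - 1).choose 3 : ℕ) : ℤ) -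
        ((Fintype.card F).choose (w - 1) : ℤ) * (((w - 2).choose 2 : ℕ) : ℤ)) := by
  set H := (Matrix.of (fun (i : Fin 4) (t : Option F) => twistedCubic F t i)).mulVecLin
  obtain ⟨u₀, hu₀V, hu₀⟩ := hwt1
  obtain ⟨c, a, ha, rfl⟩ := exists_eq_single_of_hammingNorm_eq_one hu₀
  have hmemV : ∀ u, u ∈ V ↔ H u = H v := fun u => by
    rw [hV, Set.mem_ofPred_eq, LinearMap.mem_ker, map_sub, sub_eq_zero]
  rw [hmemV] at hu₀V
  have hBw : ∀ w, 4 ≤ w → (B w : ℤ) = (Fintype.card F + 1).choose w * ∑ i ∈ range (w - 4),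
          (-1) ^ i * w.choose i * ((Fintype.card F : ℤ) ^ (w - 4 - i) - 1)
        + (-1) ^ w * ((Fintype.card F + 1).choose w * (w - 1).choose 3
          - (Fintype.card F).choose (w - 1) * (w - 2).choose 2) := fun w hw => by
    simp only [hB, hmemV, ← hu₀V]
    rw [Nat.card_eq_fintype_card, Fintype.card_subtype,
      card_fiber_single_hammingNorm_eq isMDSParityCheck_twistedCubic ha (by norm_num) hw,
      Fintype.card_option, Nat.add_sub_cancel, pow_add]
    norm_num
  refine ⟨?_, fun w hw => by rw [hBw w (by omega), hA w hw]⟩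
  have h4 := hBw 4 le_rfl
  rw [Nat.choose_succ_succ (Fintype.card F) 3] at h4
  norm_num at h4
  exact_mod_cast h4

/-- Weight distribution of the weight-1 cosets of the `[q+1, q-3, 5]_q` MDS code
associated with the twisted cubic: `B₄ = C(q,4)` and, for `w ≥ 5`,
`B_w = A_w + (-1)^w (C(q+1,w)·C(w-1,3) - C(q,w-1)·C(w-2,2))`. -/
theorem weight_one_coset_distribution (F : Type*) [Field F] [Fintype F] [DecidableEq F]
    (hq : 5 ≤ Fintype.card F)
    (A : ℕ → ℤ)
    (hA : ∀ w, 5 ≤ w → A w = ((Fintype.card F + 1).choose w : ℤ) *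
      ∑ j ∈ Finset.range (w - 4),
        (-1 : ℤ) ^ j * (w.choose j : ℤ) * ((Fintype.card F : ℤ) ^ (w - 4 - j) - 1))
    (hA0 : ∀ w, w < 5 → A w = 0)
    (v : Option F → F) (V : Set (Option F → F))
    (hV : V = {u | u - v ∈ LinearMap.ker
      (Matrix.of (fun (i : Fin 4) (t : Option F) => twistedCubic F t i)).mulVecLin})
    (hwt : ∀ u ∈ V, 1 ≤ hammingNorm u)
    (hwt1 : ∃ u ∈ V, hammingNorm u = 1)
    (B : ℕ → ℕ)
    (hB : ∀ w, B w = Nat.card {u : Option F → F // u ∈ V ∧ hammingNorm u = w}) :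
    B 4 = (Fintype.card F).choose 4 ∧
    ∀ w, 5 ≤ w → (B w : ℤ) = A w + (-1 : ℤ) ^ w *
      (((Fintype.card F + 1).choose w : ℤ) * (((w - 1).choose 3 : ℕ) : ℤ) -
        ((Fintype.card F).choose (w - 1) : ℤ) * (((w - 2).choose 2 : ℕ) : ℤ)) :=
  weight_one_coset_distribution_general F A hA v V hV hwt1 B hB
end

section
/- Let q ≥ 5, q ≡ 1 (mod 3). For the [q+1, q-3, 5]_q code associated with the twisted cubic, the number of weight-3 vectors in a coset whose syndrome is a point on a tangent line to the cubic (a T-point) equals (q² - 3q + 2)/6. -/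
set_option maxHeartbeats 1600000
set_option linter.unusedSectionVars false
set_option linter.unusedVariables false

namespace TCaux
open Submodule

variable {F : Type*} [Field F]

lemma mem_span_triple {V : Type*} [AddCommGroup V] [Module F V] {u v w x : V} :
    x ∈ span F ({u, v, w} : Set V) ↔ ∃ a b c : F, a • u + b • v + c • w = x := by
  rw [show ({u, v, w} : Set V) = insert u {v, w} from rfl, Submodule.mem_span_insert]
  constructor
  · rintro ⟨a, z, hz, rfl⟩
    obtain ⟨b, c, rfl⟩ := Submodule.mem_span_pair.1 hz
    exact ⟨a, b, c, by abel⟩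
  · rintro ⟨a, b, c, rfl⟩
    exact ⟨a, b • v + c • w, Submodule.mem_span_pair.2 ⟨b, c, rfl⟩, by abel⟩

lemma funext4 {u v : Fin 4 → F} (h0 : u 0 = v 0) (h1 : u 1 = v 1)
    (h2 : u 2 = v 2) (h3 : u 3 = v 3) : u = v := by
  funext i; fin_cases i <;> assumption

lemma tc_some (t : F) : twistedCubic F (some t) = ![1, t, t ^ 2, t ^ 3] := rfl
lemma tc_none : twistedCubic F none = ![(0:F), 0, 0, 1] := rfl

/-- Membership in the span of three affine cubic points. -/
lemma span_affine_iff {a b c : F} (hab : a ≠ b) (hac : a ≠ c) (hbc : b ≠ c)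
    (y : Fin 4 → F) :
    y ∈ span F {twistedCubic F (some a), twistedCubic F (some b), twistedCubic F (some c)} ↔
      y 3 - (a + b + c) * y 2 + (a*b + a*c + b*c) * y 1 - a*b*c * y 0 = 0 := by
  rw [mem_span_triple]
  constructor
  · rintro ⟨α, β, γ, rfl⟩
    simp only [tc_some, Pi.add_apply, Pi.smul_apply, smul_eq_mul]
    simp [Matrix.cons_val_zero, Matrix.cons_val_one]
    ring
  · intro h
    refine ⟨((b-c) * (y 2 - (b+c) * y 1 + b*c * y 0))/((a-b)*(a-c)*(b-c)),
            (-(a-c) * (y 2 - (a+c) * y 1 + a*c * y 0))/((a-b)*(a-c)*(b-c)),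
            ((a-b) * (y 2 - (a+b) * y 1 + a*b * y 0))/((a-b)*(a-c)*(b-c)), ?_⟩
    have hab' : a - b ≠ 0 := sub_ne_zero.2 hab
    have hac' : a - c ≠ 0 := sub_ne_zero.2 hac
    have hbc' : b - c ≠ 0 := sub_ne_zero.2 hbc
    have hba' : b - a ≠ 0 := sub_ne_zero.2 hab.symm
    have hca' : c - a ≠ 0 := sub_ne_zero.2 hac.symm
    have hcb' : c - b ≠ 0 := sub_ne_zero.2 hbc.symm
    apply funext4 <;>
      simp only [tc_some, Pi.add_apply, Pi.smul_apply, smul_eq_mul, Matrix.cons_val_zero,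
        Matrix.cons_val_one, Matrix.head_cons, Matrix.cons_val_two, Matrix.cons_val_three,
        Matrix.cons_val_fin_one, Matrix.tail_cons] <;>
      field_simp
    · ring
    · ring
    · ring
    · linear_combination (-(a-b)*(a-c)*(b-c)) * h


/-- Membership in the span of the point at infinity and two affine cubic points. -/
lemma span_inf_iff {a b : F} (hab : a ≠ b) (y : Fin 4 → F) :
    y ∈ span F {twistedCubic F none, twistedCubic F (some a), twistedCubic F (some b)} ↔
      y 2 - (a + b) * y 1 + a*b * y 0 = 0 := by
  rw [mem_span_triple]
  constructor
  · rintro ⟨α, β, γ, rfl⟩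
    simp only [tc_some, tc_none, Pi.add_apply, Pi.smul_apply, smul_eq_mul]
    simp [Matrix.cons_val_zero, Matrix.cons_val_one]
    ring
  · intro h
    have hab' : a - b ≠ 0 := sub_ne_zero.2 hab
    refine ⟨y 3 - ((y 1 - b * y 0)/(a-b)) * a^3 - ((a * y 0 - y 1)/(a-b)) * b^3,
            (y 1 - b * y 0)/(a-b), (a * y 0 - y 1)/(a-b), ?_⟩
    apply funext4 <;>
      simp only [tc_some, tc_none, Pi.add_apply, Pi.smul_apply, smul_eq_mul, Matrix.cons_val_zero,
        Matrix.cons_val_one, Matrix.head_cons, Matrix.cons_val_two, Matrix.cons_val_three,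
        Matrix.cons_val_fin_one, Matrix.tail_cons] <;>
      field_simp
    all_goals first | ring1 | linear_combination (a-b) * h | linear_combination (b-a) * h

/-- Which cubic points lie in the span of three affine cubic points. -/
lemma cubic_mem_affine {a b c : F} (hab : a ≠ b) (hac : a ≠ c) (hbc : b ≠ c)
    (u : Option F) :
    twistedCubic F u ∈
        span F {twistedCubic F (some a), twistedCubic F (some b), twistedCubic F (some c)} ↔
      u = some a ∨ u = some b ∨ u = some c := by
  rcases u with _ | u
  · rw [span_affine_iff hab hac hbc]
    simp [tc_none]
  · rw [span_affine_iff hab hac hbc]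
    simp only [tc_some, Matrix.cons_val_zero, Matrix.cons_val_one, Matrix.head_cons,
      Matrix.cons_val_two, Matrix.cons_val_three, Matrix.tail_cons, Option.some.injEq]
    constructor
    · intro h
      have h' : (u - a) * ((u - b) * (u - c)) = 0 := by linear_combination h
      rcases mul_eq_zero.1 h' with h'' | h''
      · exact Or.inl (sub_eq_zero.1 h'')
      · rcases mul_eq_zero.1 h'' with h3 | h3
        · exact Or.inr (Or.inl (sub_eq_zero.1 h3))
        · exact Or.inr (Or.inr (sub_eq_zero.1 h3))
    · rintro (rfl | rfl | rfl) <;> ring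

/-- Which cubic points lie in the span of infinity and two affine cubic points. -/
lemma cubic_mem_inf {a b : F} (hab : a ≠ b) (u : Option F) :
    twistedCubic F u ∈
        span F {twistedCubic F none, twistedCubic F (some a), twistedCubic F (some b)} ↔
      u = none ∨ u = some a ∨ u = some b := by
  rcases u with _ | u
  · rw [span_inf_iff hab]; simp [tc_none]
  · rw [span_inf_iff hab]
    simp only [tc_some, Matrix.cons_val_zero, Matrix.cons_val_one, Matrix.head_cons,
      Matrix.cons_val_two, Matrix.tail_cons, Option.some.injEq, reduceCtorEq, false_or]
    constructor
    · intro h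
      have h' : (u - a) * (u - b) = 0 := by linear_combination h
      rcases mul_eq_zero.1 h' with h'' | h''
      · exact Or.inl (sub_eq_zero.1 h'')
      · exact Or.inr (sub_eq_zero.1 h'')
    · rintro (rfl | rfl) <;> ring


lemma lin_indep_affine {a b c : F} (hab : a ≠ b) (hac : a ≠ c) (hbc : b ≠ c) :
    LinearIndependent F
      ![twistedCubic F (some a), twistedCubic F (some b), twistedCubic F (some c)] := by
  rw [Fintype.linearIndependent_iff]
  intro g hg
  have h0 := congrFun hg 0
  have h1 := congrFun hg 1
  have h2 := congrFun hg 2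
  simp only [Fin.sum_univ_three, Matrix.cons_val_zero, Matrix.cons_val_one, Matrix.head_cons,
    Matrix.cons_val_two, Matrix.tail_cons, Pi.add_apply, Pi.smul_apply, smul_eq_mul,
    Pi.zero_apply, tc_some] at h0 h1 h2
  have e0 : g 0 * ((a-b)*(a-c)) = 0 := by linear_combination h2 - (b+c) * h1 + b*c*h0
  have e1 : g 1 * ((b-a)*(b-c)) = 0 := by linear_combination h2 - (a+c) * h1 + a*c*h0
  have e2 : g 2 * ((c-a)*(c-b)) = 0 := by linear_combination h2 - (a+b) * h1 + a*b*h0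
  have g0 : g 0 = 0 := by
    rcases mul_eq_zero.1 e0 with h | h
    · exact h
    · exact absurd h (mul_ne_zero (sub_ne_zero.2 hab) (sub_ne_zero.2 hac))
  have g1 : g 1 = 0 := by
    rcases mul_eq_zero.1 e1 with h | h
    · exact h
    · exact absurd h (mul_ne_zero (sub_ne_zero.2 hab.symm) (sub_ne_zero.2 hbc))
  have g2 : g 2 = 0 := by
    rcases mul_eq_zero.1 e2 with h | h
    · exact h
    · exact absurd h (mul_ne_zero (sub_ne_zero.2 hac.symm) (sub_ne_zero.2 hbc.symm))
  intro i; fin_cases i <;> assumption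

lemma lin_indep_inf {a b : F} (hab : a ≠ b) :
    LinearIndependent F
      ![twistedCubic F none, twistedCubic F (some a), twistedCubic F (some b)] := by
  rw [Fintype.linearIndependent_iff]
  intro g hg
  have h0 := congrFun hg 0
  have h1 := congrFun hg 1
  have h3 := congrFun hg 3
  simp only [Fin.sum_univ_three, Matrix.cons_val_zero, Matrix.cons_val_one, Matrix.head_cons,
    Matrix.cons_val_two, Matrix.cons_val_three, Matrix.tail_cons, Pi.add_apply, Pi.smul_apply,
    smul_eq_mul, Pi.zero_apply, tc_some, tc_none] at h0 h1 h3
  have e1 : g 1 * (a - b) = 0 := by linear_combination h1 - b * h0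
  have g1 : g 1 = 0 := by
    rcases mul_eq_zero.1 e1 with h | h
    · exact h
    · exact absurd h (sub_ne_zero.2 hab)
  have g2 : g 2 = 0 := by linear_combination h0 - g1
  have g0 : g 0 = 0 := by linear_combination h3 - a^3 * g1 - b^3 * g2
  intro i; fin_cases i <;> assumption

/-- The span of three distinct cubic points has dimension 3, and contains exactly
those three cubic points. -/
lemma span_triple_props {u v w : Option F} (huv : u ≠ v) (huw : u ≠ w) (hvw : v ≠ w) :
    Module.finrank F (span F {twistedCubic F u, twistedCubic F v, twistedCubic F w}) = 3 ∧
    (∀ z : Option F, twistedCubic F z ∈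
        span F {twistedCubic F u, twistedCubic F v, twistedCubic F w} ↔
      z = u ∨ z = v ∨ z = w) := by
  have key : ∀ u' v' w' : Option F, u' ≠ v' → u' ≠ w' → v' ≠ w' →
      LinearIndependent F ![twistedCubic F u', twistedCubic F v', twistedCubic F w'] →
      (∀ z : Option F, twistedCubic F z ∈
        span F {twistedCubic F u', twistedCubic F v', twistedCubic F w'} ↔
        z = u' ∨ z = v' ∨ z = w') →
      ({u',v',w'} : Set (Option F)) = {u,v,w} →
      Module.finrank F (span F {twistedCubic F u, twistedCubic F v, twistedCubic F w}) = 3 ∧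
      (∀ z : Option F, twistedCubic F z ∈
          span F {twistedCubic F u, twistedCubic F v, twistedCubic F w} ↔
        z = u ∨ z = v ∨ z = w) := by
    intro u' v' w' h1 h2 h3 hind hmem hset
    have hPset : ({twistedCubic F u', twistedCubic F v', twistedCubic F w'} : Set (Fin 4 → F)) =
        {twistedCubic F u, twistedCubic F v, twistedCubic F w} := by
      have : twistedCubic F '' {u',v',w'} = twistedCubic F '' {u,v,w} := by rw [hset]
      simpa [Set.image_insert_eq] using this
    constructor
    · rw [← hPset]
      have hr : ({twistedCubic F u', twistedCubic F v', twistedCubic F w'} : Set (Fin 4 → F)) =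
          Set.range ![twistedCubic F u', twistedCubic F v', twistedCubic F w'] := by
        ext p
        simp only [Matrix.range_cons, Matrix.range_empty, Set.mem_insert_iff, Set.mem_union,
          Set.union_empty, Set.mem_singleton_iff, Set.mem_range]
        try tauto
      rw [hr, finrank_span_eq_card hind]
      simp
    · intro z
      rw [← hPset, hmem z]
      have hz : (z = u' ∨ z = v' ∨ z = w') ↔ z ∈ ({u',v',w'} : Set (Option F)) := by simp
      have hz' : (z = u ∨ z = v ∨ z = w) ↔ z ∈ ({u,v,w} : Set (Option F)) := by simp
      rw [hz, hz', hset]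
  rcases u with _ | a <;> rcases v with _ | b <;> rcases w with _ | c
  · exact absurd rfl huv
  · exact absurd rfl huv
  · exact absurd rfl huw
  · -- (none, some b, some c)
    have hbc : b ≠ c := fun h => hvw (by rw [h])
    exact key none (some b) (some c) (by simp) (by simp) (by simpa using hbc)
      (lin_indep_inf hbc) (cubic_mem_inf hbc) rfl
  · -- (some a, none, none)
    exact absurd rfl hvw
  · -- (some a, none, some c)
    have hac : a ≠ c := fun h => huw (by rw [h])
    exact key none (some a) (some c) (by simp) (by simp) (by simpa using hac)
      (lin_indep_inf hac) (cubic_mem_inf hac) (by ext z; simp; tauto)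
  · -- (some a, some b, none)
    have hab : a ≠ b := fun h => huv (by rw [h])
    exact key none (some a) (some b) (by simp) (by simp) (by simpa using hab)
      (lin_indep_inf hab) (cubic_mem_inf hab) (by ext z; simp; tauto)
  · -- all affine
    have hab : a ≠ b := fun h => huv (by rw [h])
    have hac : a ≠ c := fun h => huw (by rw [h])
    have hbc : b ≠ c := fun h => hvw (by rw [h])
    exact key (some a) (some b) (some c) (by simpa using hab) (by simpa using hac)
      (by simpa using hbc) (lin_indep_affine hab hac hbc) (cubic_mem_affine hab hac hbc) rfl


section Counting
variable [Fintype F] [DecidableEq F]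

open Finset

lemma model_count (nu : F) (h3 : (3:F) ≠ 0) (hq : 5 ≤ Fintype.card F) :
    (univ.filter (fun p : F × F × F =>
        p.1 ≠ p.2.1 ∧ p.1 ≠ p.2.2 ∧ p.2.1 ≠ p.2.2 ∧ p.1 + p.2.1 + p.2.2 = nu)).card =
      Fintype.card F ^ 2 - 3 * Fintype.card F + 2 := by
  classical
  set q := Fintype.card F with hqdef
  -- reduce to pairs
  have hbij : (univ.filter (fun p : F × F × F =>
        p.1 ≠ p.2.1 ∧ p.1 ≠ p.2.2 ∧ p.2.1 ≠ p.2.2 ∧ p.1 + p.2.1 + p.2.2 = nu)).card =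
      (univ.filter (fun p : F × F =>
        ¬(p.1 = p.2 ∨ 2*p.1 + p.2 = nu ∨ p.1 + 2*p.2 = nu))).card := by
    apply Finset.card_bij (fun p _ => (p.1, p.2.1))
    · rintro ⟨a, b, c⟩ hp
      simp only [mem_filter, mem_univ, true_and] at hp ⊢
      obtain ⟨h1, h2, h3', h4⟩ := hp
      push_neg
      refine ⟨h1, ?_, ?_⟩
      · intro h; exact h2 (by linear_combination h - h4)
      · intro h; exact h3' (by linear_combination h - h4)
    · rintro ⟨a, b, c⟩ hp ⟨a', b', c'⟩ hp' h
      simp only [mem_filter, mem_univ, true_and] at hp hp'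
      simp only [Prod.mk.injEq] at h
      obtain ⟨rfl, rfl⟩ := h
      have : c = c' := by linear_combination hp.2.2.2 - hp'.2.2.2
      simp [this]
    · rintro ⟨a, b⟩ hp
      simp only [mem_filter, mem_univ, true_and] at hp
      push_neg at hp
      obtain ⟨h1, h2, h3'⟩ := hp
      refine ⟨(a, b, nu - a - b), ?_, rfl⟩
      simp only [mem_filter, mem_univ, true_and]
      refine ⟨h1, ?_, ?_, by ring⟩
      · intro h; exact h2 (by linear_combination h)
      · intro h; exact h3' (by linear_combination h)
  rw [hbij]
  -- inclusion-exclusion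
  have hsplit := Finset.card_filter_add_card_filter_not (s := (univ : Finset (F × F)))
    (fun p : F × F => p.1 = p.2 ∨ 2*p.1 + p.2 = nu ∨ p.1 + 2*p.2 = nu)
  have hunion : (univ.filter (fun p : F × F =>
      p.1 = p.2 ∨ 2*p.1 + p.2 = nu ∨ p.1 + 2*p.2 = nu)).card = 3 * q - 2 := by
    rw [Finset.filter_or, Finset.filter_or, ← Finset.union_assoc]
    have hD1 : (univ.filter (fun p : F × F => p.1 = p.2)) = univ.image (fun a : F => (a, a)) := by
      ext ⟨a, b⟩
      simp only [mem_filter, mem_univ, true_and, mem_image, Prod.mk.injEq]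
      constructor
      · rintro rfl; exact ⟨a, rfl, rfl⟩
      · rintro ⟨t, rfl, rfl⟩; rfl
    have hD2 : (univ.filter (fun p : F × F => 2*p.1 + p.2 = nu)) =
        univ.image (fun a : F => (a, nu - 2*a)) := by
      ext ⟨a, b⟩
      simp only [mem_filter, mem_univ, true_and, mem_image, Prod.mk.injEq]
      constructor
      · intro h; exact ⟨a, rfl, by linear_combination -h⟩
      · rintro ⟨t, rfl, rfl⟩; ring
    have hD3 : (univ.filter (fun p : F × F => p.1 + 2*p.2 = nu)) =
        univ.image (fun b : F => (nu - 2*b, b)) := by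
      ext ⟨a, b⟩
      simp only [mem_filter, mem_univ, true_and, mem_image, Prod.mk.injEq]
      constructor
      · intro h; exact ⟨b, by linear_combination -h, rfl⟩
      · rintro ⟨t, rfl, rfl⟩; ring
    have c1 : (univ.filter (fun p : F × F => p.1 = p.2)).card = q := by
      rw [hD1, Finset.card_image_of_injective _ (fun a b h => (Prod.mk.injEq _ _ _ _ ▸ h).1)]
      simp [hqdef]
    have c2 : (univ.filter (fun p : F × F => 2*p.1 + p.2 = nu)).card = q := by
      rw [hD2, Finset.card_image_of_injective _ (fun a b h => (Prod.mk.injEq _ _ _ _ ▸ h).1)]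
      simp [hqdef]
    have c3 : (univ.filter (fun p : F × F => p.1 + 2*p.2 = nu)).card = q := by
      rw [hD3, Finset.card_image_of_injective _ (fun a b h => by
        simpa using (Prod.mk.injEq _ _ _ _ ▸ h).2)]
      simp [hqdef]
    set k := nu / 3 with hk
    have hkk : 3 * k = nu := by rw [hk]; field_simp
    have hI12 : (univ.filter (fun p : F × F => p.1 = p.2)) ∩
        (univ.filter (fun p : F × F => 2*p.1 + p.2 = nu)) = {(k, k)} := by
      ext ⟨a, b⟩
      simp only [mem_inter, mem_filter, mem_univ, true_and, mem_singleton, Prod.mk.injEq]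
      constructor
      · rintro ⟨rfl, h⟩
        have : a = k := by
          have h3a : 3 * a = 3 * k := by rw [hkk]; linear_combination h
          exact mul_left_cancel₀ h3 h3a
        exact ⟨this, this⟩
      · rintro ⟨rfl, rfl⟩; exact ⟨rfl, by linear_combination hkk⟩
    have hI3 : ((univ.filter (fun p : F × F => p.1 = p.2)) ∪
        (univ.filter (fun p : F × F => 2*p.1 + p.2 = nu))) ∩
        (univ.filter (fun p : F × F => p.1 + 2*p.2 = nu)) = {(k, k)} := by
      ext ⟨a, b⟩
      simp only [mem_inter, mem_union, mem_filter, mem_univ, true_and, mem_singleton,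
        Prod.mk.injEq]
      constructor
      · rintro ⟨h | h, h'⟩
        · subst h
          have : a = k := by
            have h3a : 3 * a = 3 * k := by rw [hkk]; linear_combination h'
            exact mul_left_cancel₀ h3 h3a
          exact ⟨this, this⟩
        · have hab : a = b := by linear_combination h - h'
          subst hab
          have : a = k := by
            have h3a : 3 * a = 3 * k := by rw [hkk]; linear_combination h'
            exact mul_left_cancel₀ h3 h3a
          exact ⟨this, this⟩
      · rintro ⟨rfl, rfl⟩
        exact ⟨Or.inl rfl, by linear_combination hkk⟩
    have hu12 := Finset.card_union_add_card_inter
      (univ.filter (fun p : F × F => p.1 = p.2))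
      (univ.filter (fun p : F × F => 2*p.1 + p.2 = nu))
    have hu3 := Finset.card_union_add_card_inter
      ((univ.filter (fun p : F × F => p.1 = p.2)) ∪
        (univ.filter (fun p : F × F => 2*p.1 + p.2 = nu)))
      (univ.filter (fun p : F × F => p.1 + 2*p.2 = nu))
    rw [hI12] at hu12
    rw [hI3] at hu3
    simp only [Finset.card_singleton] at hu12 hu3
    have hq5 : 5 ≤ q := hq
    omega
  have hcard : (univ : Finset (F × F)).card = q^2 := by
    simp [hqdef, sq]
  have hq5 : 5 ≤ q := hq
  have hq2 : 3 * q ≤ q ^ 2 := by nlinarith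
  omega


attribute [local instance] Classical.propDecidable

lemma count_S (x : Fin 4 → F) (t0 : Option F) (chi : Option F → F) (nu : F)
    (hinj : ∀ u₁ u₂, u₁ ≠ t0 → u₂ ≠ t0 → chi u₁ = chi u₂ → u₁ = u₂)
    (hsurj : ∀ v : F, ∃ u, u ≠ t0 ∧ chi u = v)
    (hkey : ∀ a b c : Option F, a ≠ b → a ≠ c → b ≠ c →
      (x ∈ span F {twistedCubic F a, twistedCubic F b, twistedCubic F c} ↔
        a ≠ t0 ∧ b ≠ t0 ∧ c ≠ t0 ∧ chi a + chi b + chi c = nu))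
    (h3 : (3:F) ≠ 0) (hq : 5 ≤ Fintype.card F) :
    (univ.filter (fun p : Option F × Option F × Option F =>
        p.1 ≠ p.2.1 ∧ p.1 ≠ p.2.2 ∧ p.2.1 ≠ p.2.2 ∧
        x ∈ span F {twistedCubic F p.1, twistedCubic F p.2.1, twistedCubic F p.2.2})).card =
      Fintype.card F ^ 2 - 3 * Fintype.card F + 2 := by
  classical
  rw [← model_count nu h3 hq]
  apply Finset.card_bij (fun p _ => (chi p.1, chi p.2.1, chi p.2.2))
  · rintro ⟨a, b, c⟩ hp
    simp only [mem_filter, mem_univ, true_and] at hp ⊢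
    obtain ⟨h1, h2, h3', h4⟩ := hp
    obtain ⟨ha, hb, hc, hsum⟩ := (hkey a b c h1 h2 h3').1 h4
    exact ⟨fun h => h1 (hinj _ _ ha hb h), fun h => h2 (hinj _ _ ha hc h),
      fun h => h3' (hinj _ _ hb hc h), hsum⟩
  · rintro ⟨a, b, c⟩ hp ⟨a', b', c'⟩ hp' h
    simp only [mem_filter, mem_univ, true_and] at hp hp'
    simp only [Prod.mk.injEq] at h
    obtain ⟨ha, hb, hc, -⟩ := (hkey a b c hp.1 hp.2.1 hp.2.2.1).1 hp.2.2.2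
    obtain ⟨ha', hb', hc', -⟩ := (hkey a' b' c' hp'.1 hp'.2.1 hp'.2.2.1).1 hp'.2.2.2
    have e1 := hinj _ _ ha ha' h.1
    have e2 := hinj _ _ hb hb' h.2.1
    have e3 := hinj _ _ hc hc' h.2.2
    simp [e1, e2, e3]
  · rintro ⟨r, s, t⟩ hp
    simp only [mem_filter, mem_univ, true_and] at hp
    obtain ⟨h1, h2, h3', h4⟩ := hp
    obtain ⟨a, ha, har⟩ := hsurj r
    obtain ⟨b, hb, hbs⟩ := hsurj s
    obtain ⟨c, hc, hct⟩ := hsurj t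
    have hab : a ≠ b := fun h => h1 (by rw [← har, ← hbs, h])
    have hac : a ≠ c := fun h => h2 (by rw [← har, ← hct, h])
    have hbc : b ≠ c := fun h => h3' (by rw [← hbs, ← hct, h])
    refine ⟨(a, b, c), ?_, by simp [har, hbs, hct]⟩
    simp only [mem_filter, mem_univ, true_and]
    exact ⟨hab, hac, hbc, (hkey a b c hab hac hbc).2
      ⟨ha, hb, hc, by rw [har, hbs, hct]; exact h4⟩⟩


lemma six_to_one (x : Fin 4 → F) :
    (univ.filter (fun p : Option F × Option F × Option F =>
        p.1 ≠ p.2.1 ∧ p.1 ≠ p.2.2 ∧ p.2.1 ≠ p.2.2 ∧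
        x ∈ span F {twistedCubic F p.1, twistedCubic F p.2.1, twistedCubic F p.2.2})).card =
      6 * Nat.card {W : Submodule F (Fin 4 → F) //
        Module.finrank F W = 3 ∧ x ∈ W ∧
        Nat.card {t : Option F // twistedCubic F t ∈ W} = 3} := by
  classical
  show _ = 6 * Nat.card {W : Submodule F (Fin 4 → F) //
        Module.finrank F W = 3 ∧ x ∈ W ∧
        Nat.card {t : Option F // twistedCubic F t ∈ W} = 3}
  set P := twistedCubic F with hP
  set Sfin : Finset (Option F × Option F × Option F) :=
    univ.filter (fun p : Option F × Option F × Option F =>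
        p.1 ≠ p.2.1 ∧ p.1 ≠ p.2.2 ∧ p.2.1 ≠ p.2.2 ∧
        x ∈ span F {P p.1, P p.2.1, P p.2.2}) with hSfin
  set Phi : Option F × Option F × Option F → Submodule F (Fin 4 → F) :=
    fun p => span F {P p.1, P p.2.1, P p.2.2} with hPhi
  set t : Finset (Submodule F (Fin 4 → F)) := Sfin.image Phi with ht
  -- cubic params inside a member of t
  have hparam : ∀ p ∈ Sfin, ∀ z : Option F,
      P z ∈ Phi p ↔ z = p.1 ∨ z = p.2.1 ∨ z = p.2.2 := by
    rintro ⟨u, v, w⟩ hp z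
    simp only [hSfin, mem_filter, mem_univ, true_and] at hp
    exact (span_triple_props hp.1 hp.2.1 hp.2.2.1).2 z
  have hrank : ∀ p ∈ Sfin, Module.finrank F (Phi p) = 3 := by
    rintro ⟨u, v, w⟩ hp
    simp only [hSfin, mem_filter, mem_univ, true_and] at hp
    exact (span_triple_props hp.1 hp.2.1 hp.2.2.1).1
  have hfib : ∀ W ∈ t, (Sfin.filter (fun p => Phi p = W)).card = 6 := by
    intro W hW
    obtain ⟨p₀, hp₀, hp₀W⟩ := Finset.mem_image.1 hW
    obtain ⟨u, v, w⟩ := p₀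
    simp only [hSfin, mem_filter, mem_univ, true_and] at hp₀
    obtain ⟨huv, huw, hvw, hxmem⟩ := hp₀
    have hp₀S : (u, v, w) ∈ Sfin := by
      simp only [hSfin, mem_filter, mem_univ, true_and]; exact ⟨huv, huw, hvw, hxmem⟩
    -- span determined by the underlying set of parameters
    have hspan_eq : ∀ a b c : Option F, ({a, b, c} : Set (Option F)) = {u, v, w} →
        Phi (a, b, c) = W := by
      intro a b c hset
      have hPset : ({P a, P b, P c} : Set (Fin 4 → F)) = {P u, P v, P w} := by
        have : P '' {a, b, c} = P '' {u, v, w} := by rw [hset]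
        simpa [Set.image_insert_eq] using this
      rw [← hp₀W]
      simp only [hPhi]
      rw [hPset]
    have hfib_eq : Sfin.filter (fun p => Phi p = W) =
        {(u,v,w), (u,w,v), (v,u,w), (v,w,u), (w,u,v), (w,v,u)} := by
      ext ⟨a, b, c⟩
      simp only [mem_filter, Finset.mem_insert, Finset.mem_singleton, Prod.mk.injEq]
      constructor
      · rintro ⟨hS, hPeq⟩
        simp only [hSfin, mem_filter, mem_univ, true_and] at hS
        obtain ⟨hab, hac, hbc, hx'⟩ := hS
        have hmemW : ∀ z : Option F, P z ∈ W ↔ z = u ∨ z = v ∨ z = w := by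
          intro z; rw [← hp₀W]; exact hparam (u,v,w) hp₀S z
        have ha : a = u ∨ a = v ∨ a = w := by
          rw [← hmemW a, ← hPeq]
          exact Submodule.subset_span (by simp)
        have hb : b = u ∨ b = v ∨ b = w := by
          rw [← hmemW b, ← hPeq]
          exact Submodule.subset_span (by simp)
        have hc : c = u ∨ c = v ∨ c = w := by
          rw [← hmemW c, ← hPeq]
          exact Submodule.subset_span (by simp)
        rcases ha with rfl|rfl|rfl <;> rcases hb with rfl|rfl|rfl <;>
          rcases hc with rfl|rfl|rfl <;> simp_all
      · intro h
        have hset : ({a, b, c} : Set (Option F)) = {u, v, w} := by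
          rcases h with ⟨rfl,rfl,rfl⟩|⟨rfl,rfl,rfl⟩|⟨rfl,rfl,rfl⟩|⟨rfl,rfl,rfl⟩|
            ⟨rfl,rfl,rfl⟩|⟨rfl,rfl,rfl⟩ <;> (ext z; simp; try tauto)
        have habc : a ≠ b ∧ a ≠ c ∧ b ≠ c := by
          rcases h with ⟨rfl,rfl,rfl⟩|⟨rfl,rfl,rfl⟩|⟨rfl,rfl,rfl⟩|⟨rfl,rfl,rfl⟩|
            ⟨rfl,rfl,rfl⟩|⟨rfl,rfl,rfl⟩ <;> refine ⟨?_, ?_, ?_⟩ <;> (intro hfoo; simp_all)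
        have hPhiW := hspan_eq a b c hset
        refine ⟨?_, hPhiW⟩
        simp only [hSfin, mem_filter, mem_univ, true_and]
        refine ⟨habc.1, habc.2.1, habc.2.2, ?_⟩
        have : x ∈ W := by rw [← hp₀W]; exact hxmem
        rw [show span F {P a, P b, P c} = W from hPhiW] at *
        exact this
    rw [hfib_eq]
    -- the six listed triples are pairwise distinct
    rw [Finset.card_insert_of_notMem, Finset.card_insert_of_notMem,
        Finset.card_insert_of_notMem, Finset.card_insert_of_notMem,
        Finset.card_insert_of_notMem, Finset.card_singleton] <;>
      simp_all [Prod.ext_iff]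
  have hsum := Finset.card_eq_sum_card_fiberwise
    (f := Phi) (s := Sfin) (t := t) (fun p hp => Finset.mem_image_of_mem Phi hp)
  rw [Finset.sum_congr rfl hfib] at hsum
  rw [Finset.sum_const, smul_eq_mul] at hsum
  -- identify t.card with the Nat.card of the subtype of planes
  have hiff : ∀ W : Submodule F (Fin 4 → F), W ∈ t ↔
      (Module.finrank F W = 3 ∧ x ∈ W ∧
        Nat.card {z : Option F // P z ∈ W} = 3) := by
    intro W
    constructor
    · intro hW
      obtain ⟨p, hp, rfl⟩ := Finset.mem_image.1 hW
      have hxW : x ∈ Phi p := by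
        simp only [hSfin, mem_filter, mem_univ, true_and] at hp
        exact hp.2.2.2
      refine ⟨hrank p hp, hxW, ?_⟩
      have hchar := hparam p hp
      have hseteq : {z : Option F | P z ∈ Phi p} = {p.1, p.2.1, p.2.2} := by
        ext z; simpa using hchar z
      have e : Nat.card {z : Option F // P z ∈ Phi p} =
          ({p.1, p.2.1, p.2.2} : Set (Option F)).ncard := by
        rw [← hseteq]; exact Nat.card_coe_set_eq _
      rw [e]
      simp only [hSfin, mem_filter, mem_univ, true_and] at hp
      exact Set.ncard_eq_three.2 ⟨p.1, p.2.1, p.2.2, hp.1, hp.2.1, hp.2.2.1, rfl⟩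
    · rintro ⟨hrk, hxW, hcard⟩
      have hset : {z : Option F | P z ∈ W}.ncard = 3 := by
        rw [← Nat.card_coe_set_eq]
        exact hcard
      obtain ⟨u, v, w, huv, huw, hvw, hset3⟩ := Set.ncard_eq_three.1 hset
      have hu : P u ∈ W := by
        have : u ∈ {z : Option F | P z ∈ W} := by rw [hset3]; simp
        exact this
      have hv : P v ∈ W := by
        have : v ∈ {z : Option F | P z ∈ W} := by rw [hset3]; simp
        exact this
      have hw : P w ∈ W := by
        have : w ∈ {z : Option F | P z ∈ W} := by rw [hset3]; simp
        exact this
      have hle : Phi (u, v, w) ≤ W := by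
        simp only [hPhi]
        rw [Submodule.span_le]
        rintro y (rfl | rfl | rfl)
        · exact hu
        · exact hv
        · exact hw
      have heq : Phi (u, v, w) = W := by
        apply Submodule.eq_of_le_of_finrank_le hle
        rw [hrk, (span_triple_props huv huw hvw).1]
      rw [Finset.mem_image]
      refine ⟨(u, v, w), ?_, heq⟩
      simp only [hSfin, mem_filter, mem_univ, true_and]
      exact ⟨huv, huw, hvw, by rw [show span F {P u, P v, P w} = W from heq]; exact hxW⟩
  have hcongr : Nat.card {W : Submodule F (Fin 4 → F) //
      Module.finrank F W = 3 ∧ x ∈ W ∧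
      Nat.card {z : Option F // P z ∈ W} = 3} = t.card := by
    rw [← Nat.card_eq_finsetCard]
    exact Nat.card_congr (Equiv.subtypeEquivRight (fun W => (hiff W).symm))
  rw [hsum, hcongr, Nat.mul_comm]

end Counting

def chiA (t : F) : Option F → F
  | none => 0
  | some a => (t - a)⁻¹

@[simp] lemma chiA_none (t : F) : chiA t (none : Option F) = 0 := rfl
@[simp] lemma chiA_some (t a : F) : chiA t (some a) = (t - a)⁻¹ := rfl

def chiB : Option F → F
  | none => 0
  | some a => a

@[simp] lemma chiB_none : chiB (none : Option F) = (0 : F) := rfl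
@[simp] lemma chiB_some (a : F) : chiB (some a) = a := rfl

lemma keyB {l m : F} (hm : m ≠ 0) (x : Fin 4 → F)
    (hx : x = l • twistedCubic F none + m • ![(0:F), 0, 1, 0]) :
    ∀ a b c : Option F, a ≠ b → a ≠ c → b ≠ c →
      (x ∈ span F {twistedCubic F a, twistedCubic F b, twistedCubic F c} ↔
        a ≠ none ∧ b ≠ none ∧ c ≠ none ∧ chiB a + chiB b + chiB c = l / m) := by
  have hx0 : x 0 = 0 := by rw [hx]; simp [tc_none]
  have hx1 : x 1 = 0 := by rw [hx]; simp [tc_none]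
  have hx2 : x 2 = m := by rw [hx]; simp [tc_none]
  have hx3 : x 3 = l := by rw [hx]; simp [tc_none]
  -- the two core computations
  have core_aff : ∀ a b c : F, a ≠ b → a ≠ c → b ≠ c →
      (x ∈ span F {twistedCubic F (some a), twistedCubic F (some b), twistedCubic F (some c)} ↔
        a + b + c = l / m) := by
    intro a b c hab hac hbc
    rw [span_affine_iff hab hac hbc, hx0, hx1, hx2, hx3]
    rw [eq_div_iff hm]
    constructor
    · intro h; linear_combination -h
    · intro h; linear_combination -h
  have core_inf : ∀ a b : F, a ≠ b →
      ¬ (x ∈ span F {twistedCubic F none, twistedCubic F (some a), twistedCubic F (some b)}) := by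
    intro a b hab h
    rw [span_inf_iff hab, hx0, hx1, hx2] at h
    exact hm (by linear_combination h)
  intro a b c hab hac hbc
  rcases a with _ | a <;> rcases b with _ | b <;> rcases c with _ | c
  · exact absurd rfl hab
  · exact absurd rfl hab
  · exact absurd rfl hac
  · -- (none, some b, some c)
    have hbc' : b ≠ c := by simpa using hbc
    simp only [ne_eq, not_true_eq_false, false_and, iff_false]
    exact core_inf b c hbc'
  · exact absurd rfl hbc
  · -- (some a, none, some c)
    have hac' : a ≠ c := by simpa using hac
    have hset : ({twistedCubic F (some a), twistedCubic F none, twistedCubic F (some c)} :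
        Set (Fin 4 → F)) = {twistedCubic F none, twistedCubic F (some a), twistedCubic F (some c)} := by
      ext z; simp; tauto
    rw [hset]
    simp only [ne_eq, not_true_eq_false, false_and, and_false, iff_false]
    exact core_inf a c hac'
  · -- (some a, some b, none)
    have hab' : a ≠ b := by simpa using hab
    have hset : ({twistedCubic F (some a), twistedCubic F (some b), twistedCubic F none} :
        Set (Fin 4 → F)) = {twistedCubic F none, twistedCubic F (some a), twistedCubic F (some b)} := by
      ext z; simp; tauto
    rw [hset]
    simp only [ne_eq, not_true_eq_false, false_and, and_false, iff_false]
    exact core_inf a b hab'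
  · -- all affine
    have hab' : a ≠ b := by simpa using hab
    have hac' : a ≠ c := by simpa using hac
    have hbc' : b ≠ c := by simpa using hbc
    rw [core_aff a b c hab' hac' hbc']
    simp


lemma keyA {t l m : F} (hm : m ≠ 0) (x : Fin 4 → F)
    (hx : x = l • twistedCubic F (some t) + m • ![(0:F), 1, 2*t, 3*t^2]) :
    ∀ a b c : Option F, a ≠ b → a ≠ c → b ≠ c →
      (x ∈ span F {twistedCubic F a, twistedCubic F b, twistedCubic F c} ↔
        a ≠ some t ∧ b ≠ some t ∧ c ≠ some t ∧
          chiA t a + chiA t b + chiA t c = -(l / m)) := by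
  have hx0 : x 0 = l := by rw [hx]; simp [tc_some]
  have hx1 : x 1 = l * t + m := by rw [hx]; simp [tc_some]
  have hx2 : x 2 = l * t^2 + 2*m*t := by rw [hx]; simp [tc_some]; ring
  have hx3 : x 3 = l * t^3 + 3*m*t^2 := by rw [hx]; simp [tc_some]; ring
  have core_aff : ∀ a b c : F, a ≠ b → a ≠ c → b ≠ c →
      (x ∈ span F {twistedCubic F (some a), twistedCubic F (some b), twistedCubic F (some c)} ↔
        a ≠ t ∧ b ≠ t ∧ c ≠ t ∧ (t-a)⁻¹ + (t-b)⁻¹ + (t-c)⁻¹ = -(l / m)) := by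
    intro a b c hab hac hbc
    rw [span_affine_iff hab hac hbc, hx0, hx1, hx2, hx3]
    constructor
    · intro h
      have hE : l*((t-a)*(t-b)*(t-c)) +
          m*((t-a)*(t-b) + (t-a)*(t-c) + (t-b)*(t-c)) = 0 := by linear_combination h
      have ha : t - a ≠ 0 := by
        intro h0
        have hat : a = t := by linear_combination -h0
        have htb : t - b ≠ 0 := sub_ne_zero.2 (fun e => hab (hat.trans e))
        have htc : t - c ≠ 0 := sub_ne_zero.2 (fun e => hac (hat.trans e))
        have : m * ((t-b)*(t-c)) = 0 := by
          linear_combination hE - (l*((t-b)*(t-c)) + m*(t-b) + m*(t-c)) * h0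
        exact hm (by
          rcases mul_eq_zero.1 this with h' | h'
          · exact h'
          · exact absurd h' (mul_ne_zero htb htc))
      have hb : t - b ≠ 0 := by
        intro h0
        have hbt : b = t := by linear_combination -h0
        have hta : t - a ≠ 0 := ha
        have htc : t - c ≠ 0 := sub_ne_zero.2 (fun e => hbc (hbt.trans e))
        have : m * ((t-a)*(t-c)) = 0 := by
          linear_combination hE - (l*((t-a)*(t-c)) + m*(t-a) + m*(t-c)) * h0
        exact hm (by
          rcases mul_eq_zero.1 this with h' | h'
          · exact h'
          · exact absurd h' (mul_ne_zero hta htc))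
      have hc : t - c ≠ 0 := by
        intro h0
        have : m * ((t-a)*(t-b)) = 0 := by
          linear_combination hE - (l*((t-a)*(t-b)) + m*(t-a) + m*(t-b)) * h0
        exact hm (by
          rcases mul_eq_zero.1 this with h' | h'
          · exact h'
          · exact absurd h' (mul_ne_zero ha hb))
      refine ⟨fun e => ha (by rw [e]; ring), fun e => hb (by rw [e]; ring),
        fun e => hc (by rw [e]; ring), ?_⟩
      field_simp
      linear_combination hE
    · rintro ⟨ha, hb, hc, hsum⟩
      have ha' : t - a ≠ 0 := sub_ne_zero.2 (fun e => ha e.symm)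
      have hb' : t - b ≠ 0 := sub_ne_zero.2 (fun e => hb e.symm)
      have hc' : t - c ≠ 0 := sub_ne_zero.2 (fun e => hc e.symm)
      field_simp at hsum
      linear_combination hsum
  have core_inf : ∀ a b : F, a ≠ b →
      (x ∈ span F {twistedCubic F none, twistedCubic F (some a), twistedCubic F (some b)} ↔
        a ≠ t ∧ b ≠ t ∧ (t-a)⁻¹ + (t-b)⁻¹ = -(l / m)) := by
    intro a b hab
    rw [span_inf_iff hab, hx0, hx1, hx2]
    constructor
    · intro h
      have hE : l*((t-a)*(t-b)) + m*((t-a) + (t-b)) = 0 := by linear_combination h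
      have ha : t - a ≠ 0 := by
        intro h0
        have hat : a = t := by linear_combination -h0
        have htb : t - b ≠ 0 := sub_ne_zero.2 (fun e => hab (hat.trans e))
        have : m * (t-b) = 0 := by
          linear_combination hE - (l*(t-b) + m) * h0
        exact hm (by
          rcases mul_eq_zero.1 this with h' | h'
          · exact h'
          · exact absurd h' htb)
      have hb : t - b ≠ 0 := by
        intro h0
        have : m * (t-a) = 0 := by
          linear_combination hE - (l*(t-a) + m) * h0
        exact hm (by
          rcases mul_eq_zero.1 this with h' | h'
          · exact h'
          · exact absurd h' ha)
      refine ⟨fun e => ha (by rw [e]; ring), fun e => hb (by rw [e]; ring), ?_⟩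
      field_simp
      linear_combination hE
    · rintro ⟨ha, hb, hsum⟩
      have ha' : t - a ≠ 0 := sub_ne_zero.2 (fun e => ha e.symm)
      have hb' : t - b ≠ 0 := sub_ne_zero.2 (fun e => hb e.symm)
      field_simp at hsum
      linear_combination hsum
  intro a b c hab hac hbc
  rcases a with _ | a <;> rcases b with _ | b <;> rcases c with _ | c
  · exact absurd rfl hab
  · exact absurd rfl hab
  · exact absurd rfl hac
  · -- (none, some b, some c)
    have hbc' : b ≠ c := by simpa using hbc
    rw [core_inf b c hbc']
    simp only [ne_eq, Option.some.injEq, chiA_none, chiA_some, reduceCtorEq,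
      not_false_eq_true, true_and]
    constructor
    · rintro ⟨h1, h2, h3⟩; exact ⟨h1, h2, by linear_combination h3⟩
    · rintro ⟨h1, h2, h3⟩; exact ⟨h1, h2, by linear_combination h3⟩
  · exact absurd rfl hbc
  · -- (some a, none, some c)
    have hac' : a ≠ c := by simpa using hac
    have hset : ({twistedCubic F (some a), twistedCubic F none, twistedCubic F (some c)} :
        Set (Fin 4 → F)) =
        {twistedCubic F none, twistedCubic F (some a), twistedCubic F (some c)} := by
      ext z; simp; tauto
    rw [hset, core_inf a c hac']
    simp only [ne_eq, Option.some.injEq, chiA_none, chiA_some, reduceCtorEq,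
      not_false_eq_true, true_and]
    constructor
    · rintro ⟨h1, h2, h3⟩; exact ⟨h1, h2, by linear_combination h3⟩
    · rintro ⟨h1, h2, h3⟩; exact ⟨h1, h2, by linear_combination h3⟩
  · -- (some a, some b, none)
    have hab' : a ≠ b := by simpa using hab
    have hset : ({twistedCubic F (some a), twistedCubic F (some b), twistedCubic F none} :
        Set (Fin 4 → F)) =
        {twistedCubic F none, twistedCubic F (some a), twistedCubic F (some b)} := by
      ext z; simp; tauto
    rw [hset, core_inf a b hab']
    simp only [ne_eq, Option.some.injEq, chiA_none, chiA_some, reduceCtorEq,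
      not_false_eq_true, true_and]
    constructor
    · rintro ⟨h1, h2, h3⟩; exact ⟨h1, h2, by linear_combination h3⟩
    · rintro ⟨h1, h2, h3⟩; exact ⟨h1, h2, by linear_combination h3⟩
  · -- all affine
    have hab' : a ≠ b := by simpa using hab
    have hac' : a ≠ c := by simpa using hac
    have hbc' : b ≠ c := by simpa using hbc
    rw [core_aff a b c hab' hac' hbc']
    simp


lemma char_ne_three [Fintype F] (hq3 : Fintype.card F % 3 = 1) : (3 : F) ≠ 0 := by
  intro h
  have hp : CharP F (ringChar F) := ringChar.charP F
  have hdvd : ringChar F ∣ 3 := ringChar.dvd (by exact_mod_cast h)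
  have hprime : (ringChar F).Prime := CharP.char_is_prime F (ringChar F)
  have h3 : ringChar F = 3 := by
    rcases (Nat.prime_three).eq_one_or_self_of_dvd _ hdvd with h' | h'
    · exact absurd h' hprime.ne_one
    · exact h'
  obtain ⟨n, -, hcard⟩ := FiniteField.card F (ringChar F)
  rw [h3] at hcard
  have : 3 ∣ Fintype.card F := hcard ▸ dvd_pow_self 3 n.ne_zero
  omega

lemma chiA_inj (t : F) : ∀ u₁ u₂ : Option F, u₁ ≠ some t → u₂ ≠ some t →
    chiA t u₁ = chiA t u₂ → u₁ = u₂ := by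
  rintro (_ | a) (_ | b) h1 h2 h
  · rfl
  · have hb : t - b ≠ 0 := sub_ne_zero.2 (fun e => h2 (by rw [e]))
    simp only [chiA_none, chiA_some] at h
    exact absurd h.symm (inv_ne_zero hb)
  · have ha : t - a ≠ 0 := sub_ne_zero.2 (fun e => h1 (by rw [e]))
    simp only [chiA_none, chiA_some] at h
    exact absurd h (inv_ne_zero ha)
  · simp only [chiA_some] at h
    have := inv_injective h
    have : a = b := by linear_combination -this
    rw [this]

lemma chiA_surj (t : F) : ∀ v : F, ∃ u : Option F, u ≠ some t ∧ chiA t u = v := by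
  intro v
  rcases eq_or_ne v 0 with rfl | hv
  · exact ⟨none, by simp, rfl⟩
  · refine ⟨some (t - v⁻¹), ?_, ?_⟩
    · simp only [ne_eq, Option.some.injEq]
      intro h
      have : v⁻¹ = 0 := by linear_combination -h
      exact hv (by simpa using (inv_eq_zero.1 this))
    · simp only [chiA_some]
      rw [show t - (t - v⁻¹) = v⁻¹ by ring, inv_inv]

lemma chiB_inj : ∀ u₁ u₂ : Option F, u₁ ≠ none → u₂ ≠ none →
    chiB u₁ = chiB u₂ → u₁ = u₂ := by
  rintro (_ | a) (_ | b) h1 h2 h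
  · rfl
  · exact absurd rfl h1
  · exact absurd rfl h2
  · simpa using h

lemma chiB_surj : ∀ v : F, ∃ u : Option F, u ≠ none ∧ chiB u = v :=
  fun v => ⟨some v, by simp, rfl⟩

end TCaux

/-- For `q ≡ 1 (mod 3)`, the number `N` of planes meeting the twisted cubic in
exactly 3 points that pass through a T-point (a point off the cubic lying on a
tangent line to the cubic) satisfies `6·N = q² - 3q + 2`, i.e.
`N = (q² - 3q + 2)/6`.  Planes of `PG(3,q)` are the 3-dimensional subspaces of
`F⁴`; the tangent at the affine point `P(t)` is spanned by `P(t)` and the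
derivative vector `(0, 1, 2t, 3t²)`, and the tangent at `P(∞)` is spanned by
`(0,0,0,1)` and `(0,0,1,0)`. -/
theorem planes_through_T_point (F : Type*) [Field F] [Fintype F]
    (hq : 5 ≤ Fintype.card F) (hq3 : Fintype.card F % 3 = 1)
    (x : Fin 4 → F) (hx : x ≠ 0)
    (hxC : ∀ (t : Option F) (l : F), x ≠ l • twistedCubic F t)
    (hxT : (∃ t : F, x ∈ Submodule.span F
              {twistedCubic F (some t), ![(0 : F), 1, 2 * t, 3 * t ^ 2]}) ∨
           x ∈ Submodule.span F {twistedCubic F none, ![(0 : F), 0, 1, 0]}) :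
    6 * Nat.card {W : Submodule F (Fin 4 → F) //
        Module.finrank F W = 3 ∧ x ∈ W ∧
        Nat.card {t : Option F // twistedCubic F t ∈ W} = 3} =
      Fintype.card F ^ 2 - 3 * Fintype.card F + 2 := by
  letI := Classical.decEq F
  have h3 : (3 : F) ≠ 0 := TCaux.char_ne_three hq3
  rw [← TCaux.six_to_one x]
  rcases hxT with ⟨t, ht⟩ | hinf
  · obtain ⟨l, m, hlm⟩ := Submodule.mem_span_pair.1 ht
    have hm : m ≠ 0 := by
      rintro rfl
      apply hxC (some t) l
      rw [← hlm]
      simp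
    exact TCaux.count_S x (some t) (TCaux.chiA t) (-(l/m)) (TCaux.chiA_inj t)
      (TCaux.chiA_surj t) (TCaux.keyA hm x hlm.symm) h3 hq
  · obtain ⟨l, m, hlm⟩ := Submodule.mem_span_pair.1 hinf
    have hm : m ≠ 0 := by
      rintro rfl
      apply hxC none l
      rw [← hlm]
      simp
    exact TCaux.count_S x none TCaux.chiB (l/m) TCaux.chiB_inj
      TCaux.chiB_surj (TCaux.keyB hm x hlm.symm) h3 hq
end
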